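/- arXiv:2205.11936 — 6 statements merged into one kernel-verified Lean document; each statement's English description precedes it below -/
import Mathlib

section
/- Strong maximum principle, interior positivity (Theorem 2.1(i)). Let g : (α,ω) × ℝ × ℝ → ℝ be an arbitrary function and let v ∈ W^{2,1}_loc(α,ω) ∩ W^{1,1}(α,ω) be a nonnegative function, not identically zero, with v''(t) = g(t, v(t), v'(t)) for almost every t ∈ (α,ω). Assume condition (G): there exist a constant ε > 0 and an absolutely continuous function G : [0,ε] → ℝ such that 0 ≤ g(t, v(t), v'(t)) ≤ G'(v(t)) for almost every t ∈ (α,ω) at which 0 < v(t) ≤ ε and |v'(t)| ≤ ε, and either G(s) = 0 for all s ∈ (0,ε], or G(s) > 0 for all s ∈ (0,ε] and ∫₀^ε ds/√(G(s)) = +∞. Then v(t) > 0 for every t ∈ (α,ω). -/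
open Set Filter MeasureTheory Topology

/-!
If `v` vanished somewhere without vanishing identically, then (after the reflection `t ↦ -t`
if necessary) it would have a last zero `c` followed by points where `v > 0`. Since `c` is an
interior minimum, `v'(c) = 0`, so just to the right of `c` the comparison `0 ≤ v'' ≤ G' ∘ v`
is in force. Hence `v' ≥ 0`, and the energy identity `v'² = 2 ∫ v' v''` together with the
monotone change of variables `∫ v' · G' ∘ v = ∫ G'` gives `v'² ≤ 2 (G ∘ v - G 0)`.
If `G ≡ 0` this forces `v' ≡ 0`, so `v` cannot leave `0`. Otherwise
`∫₀^{v(b)} ds / √(2 G s) = ∫_c^b v' / √(2 G ∘ v) ≤ b - c` is finite, contradicting the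
divergence of `∫₀^ε ds / √(G s)`.
-/

theorem ContinuousOn.exists_mem_Ico_forall_Ioc_ne {β : Type*} [TopologicalSpace β] [T1Space β]
    {f : ℝ → β} {a b : ℝ} {y : β} (hab : a ≤ b) (hf : ContinuousOn f (Icc a b)) (ha : f a = y)
    (hb : f b ≠ y) :
    ∃ c ∈ Ico a b, f c = y ∧ ∀ t ∈ Ioc c b, f t ≠ y := by
  set Z := Icc a b ∩ f ⁻¹' {y}
  have hZ : IsClosed Z := hf.preimage_isClosed_of_isClosed isClosed_Icc isClosed_singleton
  have hbdd : BddAbove Z := bddAbove_Icc.mono inter_subset_left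
  have hc : sSup Z ∈ Z := hZ.csSup_mem ⟨a, ⟨le_rfl, hab⟩, ha⟩ hbdd
  refine ⟨sSup Z, ⟨hc.1.1, hc.1.2.lt_of_ne fun h => hb (h ▸ hc.2)⟩, hc.2, fun t ht hft => ?_⟩
  exact (le_csSup hbdd ⟨⟨hc.1.1.trans ht.1.le, ht.2⟩, hft⟩).not_gt ht.1

theorem sq_intervalIntegral_eq_two_mul_integral {f : ℝ → ℝ} {a b : ℝ}
    (hf : IntervalIntegrable f volume a b) :
    (∫ x in a..b, f x) ^ 2 = 2 * ∫ x in a..b, (∫ t in a..x, f t) * f x := by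
  set F : ℝ → ℝ := fun x => ∫ t in a..x, f t
  have hF := hf.absolutelyContinuousOnInterval_intervalIntegral left_mem_uIcc
  have hderiv : ∀ᵐ x, x ∈ uIoc a b → deriv F x * F x + F x * deriv F x = 2 * (F x * f x) := by
    filter_upwards [hf.ae_hasDerivAt_integral] with x hx hxab
    rw [(hx (uIoc_subset_uIcc hxab) a left_mem_uIcc).deriv]
    ring
  have key := hF.integral_deriv_mul_eq_sub hF
  rw [intervalIntegral.integral_congr_ae hderiv, intervalIntegral.integral_const_mul] at key
  simpa [F, sq] using key.symm

theorem ae_restrict_Icc_of_ae_Ioc {p : ℝ → Prop} {a b : ℝ} (h : ∀ᵐ t, t ∈ Ioc a b → p t) :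
    ∀ᵐ t ∂volume.restrict (Icc a b), p t := by
  rw [← Measure.restrict_congr_set Ioc_ae_eq_Icc]
  exact (ae_restrict_iff' measurableSet_Ioc).mpr h

theorem integral_nonneg_of_ae_Ioc {f : ℝ → ℝ} {a b x : ℝ} (hx : x ∈ Icc a b)
    (hf : ∀ᵐ t, t ∈ Ioc a b → 0 ≤ f t) : 0 ≤ ∫ t in a..x, f t :=
  intervalIntegral.integral_nonneg_of_ae_restrict hx.1 <|
    ae_restrict_of_ae_restrict_of_subset (Icc_subset_Icc_right hx.2)
      (ae_restrict_Icc_of_ae_Ioc hf)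

theorem sq_le_two_mul_integral_of_ae_le_comp {w w' w'' g : ℝ → ℝ} {a b : ℝ} (hab : a ≤ b)
    (hw : ∀ x ∈ Icc a b, HasDerivAt w (w' x) x) (hw'_nonneg : ∀ x ∈ Icc a b, 0 ≤ w' x)
    (hw'' : IntervalIntegrable w'' volume a b) (hw' : ∀ x ∈ Icc a b, w' x = ∫ t in a..x, w'' t)
    (hg : IntegrableOn g (Icc (w a) (w b))) (hle : ∀ᵐ t, t ∈ Ioc a b → w'' t ≤ g (w t)) :
    w' b ^ 2 ≤ 2 * ∫ s in Icc (w a) (w b), g s := by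
  have hw'_cont : ContinuousOn w' (Icc a b) := by
    rw [← uIcc_of_le hab]
    exact (intervalIntegral.continuousOn_primitive_interval' hw'' left_mem_uIcc).congr
      fun x hx => hw' x (uIcc_of_le hab ▸ hx)
  have hw_cont : ContinuousOn w (Icc a b) := fun x hx => (hw x hx).continuousAt.continuousWithinAt
  have hw_Ioo : ∀ x ∈ Ioo a b, HasDerivAt w (w' x) x := fun x hx => hw x (Ioo_subset_Icc_self hx)
  have hw'_Ioo : ∀ x ∈ Ioo a b, 0 ≤ w' x := fun x hx => hw'_nonneg x (Ioo_subset_Icc_self hx)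
  have hcomp : IntegrableOn (fun x => w' x * g (w x)) (Icc a b) :=
    (integrableOn_Icc_deriv_smul_iff_of_deriv_nonneg hw_cont hw_Ioo hw'_Ioo hab).mpr hg
  calc w' b ^ 2 = 2 * ∫ x in a..b, w' x * w'' x := by
        rw [hw' b ⟨hab, le_rfl⟩, sq_intervalIntegral_eq_two_mul_integral hw'']
        congr 1
        refine intervalIntegral.integral_congr fun x hx => ?_
        rw [hw' x (uIcc_of_le hab ▸ hx)]
    _ ≤ 2 * ∫ x in a..b, w' x * g (w x) := by
        gcongr
        refine intervalIntegral.integral_mono_ae_restrict hab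
          (hw''.continuousOn_mul (uIcc_of_le hab ▸ hw'_cont))
          ((intervalIntegrable_iff_integrableOn_Icc_of_le hab).mpr hcomp) ?_
        filter_upwards [ae_restrict_Icc_of_ae_Ioc hle, ae_restrict_mem measurableSet_Icc]
          with t ht htab
        exact mul_le_mul_of_nonneg_left ht (hw'_nonneg t htab)
    _ = 2 * ∫ s in Icc (w a) (w b), g s := by
        rw [intervalIntegral.integral_of_le hab, ← integral_Icc_eq_integral_Ioc,
          ← integral_Icc_deriv_smul_of_deriv_nonneg hw_cont hw_Ioo hw'_Ioo hab]
        rfl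

theorem monotoneOn_Icc_of_hasDerivAt_nonneg {w w' : ℝ → ℝ} {a b : ℝ}
    (hw : ∀ x ∈ Icc a b, HasDerivAt w (w' x) x) (hw'_nonneg : ∀ x ∈ Icc a b, 0 ≤ w' x) :
    MonotoneOn w (Icc a b) :=
  monotoneOn_of_hasDerivWithinAt_nonneg (convex_Icc a b)
    (fun x hx => (hw x hx).continuousAt.continuousWithinAt)
    (by simpa using fun x hx => (hw x (Ioo_subset_Icc_self hx)).hasDerivWithinAt)
    (by simpa using fun x hx => hw'_nonneg x (Ioo_subset_Icc_self hx))

theorem lintegral_one_div_sqrt_le {w w' H : ℝ → ℝ} {a b : ℝ} (hab : a ≤ b)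
    (hw : ∀ x ∈ Icc a b, HasDerivAt w (w' x) x) (hw'_nonneg : ∀ x ∈ Icc a b, 0 ≤ w' x)
    (hH : ∀ x ∈ Icc a b, w' x ^ 2 ≤ H (w x)) :
    ∫⁻ y in Icc (w a) (w b), ENNReal.ofReal (1 / √(H y)) ≤ ENNReal.ofReal (b - a) := by
  have hw_cont : ContinuousOn w (Icc a b) := fun x hx => (hw x hx).continuousAt.continuousWithinAt
  have hmono := monotoneOn_Icc_of_hasDerivAt_nonneg hw hw'_nonneg
  rw [← hw_cont.image_Icc_of_monotoneOn hab hmono,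
    lintegral_image_eq_lintegral_deriv_mul_of_monotoneOn measurableSet_Icc
      (fun x hx => (hw x hx).hasDerivWithinAt) hmono]
  calc ∫⁻ x in Icc a b, ENNReal.ofReal (w' x) * ENNReal.ofReal (1 / √(H (w x)))
      ≤ ∫⁻ _ in Icc a b, 1 := by
        refine setLIntegral_mono (by fun_prop) fun x hx => ?_
        rw [← ENNReal.ofReal_mul (hw'_nonneg x hx), ← ENNReal.ofReal_one, mul_one_div]
        exact ENNReal.ofReal_le_ofReal
          (div_le_one_of_le₀ (Real.le_sqrt_of_sq_le (hH x hx)) (Real.sqrt_nonneg _))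
    _ = ENNReal.ofReal (b - a) := by simp

theorem lintegral_one_div_sqrt_const_mul_eq_top {G : ℝ → ℝ} {c m ε : ℝ} (hc : 0 < c)
    (hG : ContinuousOn G (Icc 0 ε)) (hpos : ∀ s ∈ Ioc 0 ε, 0 < G s)
    (hnint : ¬ IntegrableOn (fun s => 1 / √(G s)) (Ioc 0 ε)) (hm : m ∈ Ioc 0 ε) :
    ∫⁻ s in Icc 0 m, ENNReal.ofReal (1 / √(c * G s)) = ⊤ := by
  by_contra hfin
  have hmeas : AEStronglyMeasurable (fun s => 1 / √(c * G s)) (volume.restrict (Icc 0 m)) :=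
    (by fun_prop : Measurable fun r : ℝ => 1 / √(c * r)).comp_aemeasurable
      ((hG.mono (Icc_subset_Icc_right hm.2)).aemeasurable measurableSet_Icc)
      |>.aestronglyMeasurable
  have hint : IntegrableOn (fun s => 1 / √(c * G s)) (Icc 0 m) :=
    ⟨hmeas, (hasFiniteIntegral_iff_ofReal (Eventually.of_forall fun s => by positivity)).mpr
      (lt_top_iff_ne_top.mpr hfin)⟩
  have hnear : IntegrableOn (fun s => 1 / √(G s)) (Ioc 0 m) := by
    refine (IntegrableOn.mono_set (hint.const_mul √c) Ioc_subset_Icc_self).congr_fun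
      (fun s _ => ?_) measurableSet_Ioc
    have : √c ≠ 0 := (Real.sqrt_pos.mpr hc).ne'
    simp only [Real.sqrt_mul hc.le, one_div, mul_inv, ← mul_assoc, mul_inv_cancel₀ this, one_mul]
  have hfar : IntegrableOn (fun s => 1 / √(G s)) (Ioc m ε) := by
    refine ContinuousOn.integrableOn_Icc ?_ |>.mono_set Ioc_subset_Icc_self
    refine continuousOn_const.div ((hG.mono (Icc_subset_Icc_left hm.1.le)).sqrt) fun s hs => ?_
    exact (Real.sqrt_pos.mpr (hpos s ⟨hm.1.trans_le hs.1, hs.2⟩)).ne'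
  exact hnint (Ioc_union_Ioc_eq_Ioc hm.1.le hm.2 ▸ hnear.union hfar)

/-- Condition (G), apart from the comparison `g ≤ G' ∘ v`, which involves the solution. -/
structure ConditionG (ε : ℝ) (G G' : ℝ → ℝ) : Prop where
  pos : 0 < ε
  integrableOn : IntegrableOn G' (Icc 0 ε)
  eq_add_integral : ∀ s ∈ Icc 0 ε, G s = G 0 + ∫ r in 0..s, G' r
  dichotomy : (∀ s ∈ Ioc 0 ε, G s = 0) ∨
    ((∀ s ∈ Ioc 0 ε, 0 < G s) ∧ ¬ IntegrableOn (fun s => 1 / √(G s)) (Ioc 0 ε))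

namespace ConditionG

variable {ε : ℝ} {G G' : ℝ → ℝ}

theorem continuousOn (h : ConditionG ε G G') : ContinuousOn G (Icc 0 ε) := by
  have hprim := intervalIntegral.continuousOn_primitive_interval' (b₁ := 0) (b₂ := ε)
    ((intervalIntegrable_iff_integrableOn_Icc_of_le h.pos.le).mpr h.integrableOn) left_mem_uIcc
  rw [uIcc_of_le h.pos.le] at hprim
  exact (continuousOn_const.add hprim).congr h.eq_add_integral

theorem mapsTo_Icc (h : ConditionG ε G G') {t : Set ℝ} (ht : IsClosed t)
    (hG : MapsTo G (Ioc 0 ε) t) : MapsTo G (Icc 0 ε) t := by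
  have hc := h.continuousOn
  rw [← closure_Ioc h.pos.ne] at hc ⊢
  exact ht.closure_eq ▸ hG.closure_of_continuousOn hc

theorem integral_eq_sub (h : ConditionG ε G G') {s : ℝ} (hs : s ∈ Icc 0 ε) :
    ∫ r in Icc 0 s, G' r = G s - G 0 := by
  rw [integral_Icc_eq_integral_Ioc, ← intervalIntegral.integral_of_le hs.1, h.eq_add_integral s hs]
  ring

theorem eq_zero_of_ae_le_comp {a b : ℝ} {w w' w'' : ℝ → ℝ} (hG : ConditionG ε G G')
    (hab : a ≤ b) (hw : ∀ x ∈ Icc a b, HasDerivAt w (w' x) x)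
    (hw'' : IntervalIntegrable w'' volume a b) (hw' : ∀ x ∈ Icc a b, w' x = ∫ t in a..x, w'' t)
    (hwa : w a = 0) (hwε : ∀ x ∈ Icc a b, w x ≤ ε)
    (hle : ∀ᵐ t, t ∈ Ioc a b → 0 ≤ w'' t ∧ w'' t ≤ G' (w t)) : w b = 0 := by
  have hw'_nonneg : ∀ x ∈ Icc a b, 0 ≤ w' x := fun x hx =>
    hw' x hx ▸ integral_nonneg_of_ae_Ioc hx (hle.mono fun t ht h => (ht h).1)
  have hw_mem : ∀ x ∈ Icc a b, w x ∈ Icc 0 ε := fun x hx =>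
    ⟨hwa ▸ monotoneOn_Icc_of_hasDerivAt_nonneg hw hw'_nonneg ⟨le_rfl, hab⟩ hx hx.1, hwε x hx⟩
  have henergy : ∀ x ∈ Icc a b, w' x ^ 2 ≤ 2 * (G (w x) - G 0) := fun x hx => by
    have hsub : Icc a x ⊆ Icc a b := Icc_subset_Icc_right hx.2
    have := sq_le_two_mul_integral_of_ae_le_comp hx.1 (fun y hy => hw y (hsub hy))
      (fun y hy => hw'_nonneg y (hsub hy))
      (hw''.mono_set (uIcc_subset_uIcc_left (uIcc_of_le hab ▸ hx)))
      (fun y hy => hw' y (hsub hy))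
      (hG.integrableOn.mono_set (hwa ▸ Icc_subset_Icc_right (hw_mem x hx).2))
      (hle.mono fun t ht h => (ht (Ioc_subset_Ioc_right hx.2 h)).2)
    rwa [hwa, hG.integral_eq_sub (hw_mem x hx)] at this
  rcases hG.dichotomy with hzero | ⟨hpos, hnint⟩
  · have hGzero := hG.mapsTo_Icc isClosed_singleton hzero
    have hw'_zero : ∀ x ∈ Icc a b, w' x = 0 := fun x hx => by
      have := henergy x hx
      rw [hGzero (hw_mem x hx), hGzero ⟨le_rfl, hG.pos.le⟩] at this
      exact pow_eq_zero_iff two_ne_zero |>.mp (le_antisymm (by simpa using this) (sq_nonneg _))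
    rw [← hwa]
    exact constant_of_has_deriv_right_zero (fun x hx => (hw x hx).continuousAt.continuousWithinAt)
      (fun x hx => hw'_zero x (Ico_subset_Icc_self hx) ▸
        (hw x (Ico_subset_Icc_self hx)).hasDerivWithinAt)
      b ⟨hab, le_rfl⟩
  · by_contra hb
    have hG0 : 0 ≤ G 0 :=
      hG.mapsTo_Icc isClosed_Ici (fun s hs => (hpos s hs).le) ⟨le_rfl, hG.pos.le⟩
    have hbound := lintegral_one_div_sqrt_le (H := fun y => 2 * G y) hab hw hw'_nonneg
      fun x hx => by linarith [henergy x hx]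
    rw [hwa, lintegral_one_div_sqrt_const_mul_eq_top two_pos hG.continuousOn hpos hnint
      ⟨(hw_mem b ⟨hab, le_rfl⟩).1.lt_of_ne' hb, hwε b ⟨hab, le_rfl⟩⟩] at hbound
    exact ENNReal.ofReal_ne_top (top_le_iff.mp hbound)

end ConditionG

structure IsW21LocOn (v v' v'' : ℝ → ℝ) (α ω : ℝ) : Prop where
  hasDerivAt : ∀ x ∈ Ioo α ω, HasDerivAt v (v' x) x
  continuousOn_deriv : ContinuousOn v' (Ioo α ω)
  deriv_eq_add_integral : ∀ x ∈ Ioo α ω, ∀ y ∈ Ioo α ω, x ≤ y →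
    IntervalIntegrable v'' volume x y ∧ v' y = v' x + ∫ t in x..y, v'' t

namespace IsW21LocOn

variable {v v' v'' : ℝ → ℝ} {α ω : ℝ}

theorem comp_neg (hv : IsW21LocOn v v' v'' α ω) :
    IsW21LocOn (fun t => v (-t)) (fun t => -v' (-t)) (fun t => v'' (-t)) (-ω) (-α) where
  hasDerivAt x hx := by
    simpa [Function.comp_def] using
      (hv.hasDerivAt (-x) (neg_mem_Ioo_iff.mpr hx)).comp x (hasDerivAt_neg x)
  continuousOn_deriv :=
    (hv.continuousOn_deriv.comp continuous_neg.continuousOn fun x hx => neg_mem_Ioo_iff.mpr hx).neg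
  deriv_eq_add_integral x hx y hy hxy := by
    obtain ⟨hint, heq⟩ := hv.deriv_eq_add_integral (-y) (neg_mem_Ioo_iff.mpr hy) (-x)
      (neg_mem_Ioo_iff.mpr hx) (neg_le_neg hxy)
    refine ⟨by simpa using (IntervalIntegrable.iff_comp_neg (by simp)).mp hint.symm, ?_⟩
    rw [intervalIntegral.integral_comp_neg, heq]
    ring

variable {ε : ℝ} {G G' : ℝ → ℝ}

theorem eq_zero_of_eq_zero_of_le (hv : IsW21LocOn v v' v'' α ω) (hG : ConditionG ε G G')
    (hv_nonneg : ∀ t ∈ Ioo α ω, 0 ≤ v t)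
    (hineq : ∀ᵐ t, t ∈ Ioo α ω → 0 < v t → v t ≤ ε → |v' t| ≤ ε → 0 ≤ v'' t ∧ v'' t ≤ G' (v t))
    {t₀ t₁ : ℝ} (ht₀ : t₀ ∈ Ioo α ω) (ht₁ : t₁ ∈ Ioo α ω) (h01 : t₀ ≤ t₁) (hv₀ : v t₀ = 0) :
    v t₁ = 0 := by
  by_contra hv₁
  have hsub : Icc t₀ t₁ ⊆ Ioo α ω := ordConnected_Ioo.out ht₀ ht₁
  obtain ⟨c, hc, hvc, hpos⟩ := ContinuousOn.exists_mem_Ico_forall_Ioc_ne h01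
    (fun x hx => (hv.hasDerivAt x (hsub hx)).continuousAt.continuousWithinAt) hv₀ hv₁
  have hcI : c ∈ Ioo α ω := hsub (Ico_subset_Icc_self hc)
  have hv'c : v' c = 0 := by
    refine IsLocalMin.hasDerivAt_eq_zero ?_ (hv.hasDerivAt c hcI)
    filter_upwards [isOpen_Ioo.mem_nhds hcI] with t ht
    exact hvc ▸ hv_nonneg t ht
  have hsmall : ∀ᶠ t in 𝓝 c, v t ≤ ε ∧ |v' t| ≤ ε := by
    have hv_lim := (hv.hasDerivAt c hcI).continuousAt.tendsto
    have hv'_lim := (hv.continuousOn_deriv.continuousAt (isOpen_Ioo.mem_nhds hcI)).tendsto.abs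
    rw [hvc] at hv_lim
    rw [hv'c, abs_zero] at hv'_lim
    filter_upwards [hv_lim.eventually_le_const hG.pos, hv'_lim.eventually_le_const hG.pos]
      with t h1 h2 using ⟨h1, h2⟩
  obtain ⟨u, hcu, hu⟩ := mem_nhdsGE_iff_exists_Icc_subset.mp (nhdsWithin_le_nhds hsmall)
  set b := min u t₁
  have hcb : c < b := lt_min hcu hc.2
  have hbI : b ∈ Ioo α ω := hsub ⟨hc.1.trans hcb.le, min_le_right _ _⟩
  have hcbI : Icc c b ⊆ Ioo α ω := ordConnected_Ioo.out hcI hbI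
  have hcb_small : ∀ x ∈ Icc c b, v x ≤ ε ∧ |v' x| ≤ ε :=
    fun x hx => hu ⟨hx.1, hx.2.trans (min_le_left _ _)⟩
  have hcb_pos : ∀ x ∈ Ioc c b, 0 < v x :=
    fun x hx => (hv_nonneg x (hcbI (Ioc_subset_Icc_self hx))).lt_of_ne'
      (hpos x ⟨hx.1, hx.2.trans (min_le_right _ _)⟩)
  refine (hcb_pos b ⟨hcb, le_rfl⟩).ne' (hG.eq_zero_of_ae_le_comp hcb.le
    (fun x hx => hv.hasDerivAt x (hcbI hx)) (hv.deriv_eq_add_integral c hcI b hbI hcb.le).1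
    (fun x hx => ?_) hvc (fun x hx => (hcb_small x hx).1) ?_)
  · rw [(hv.deriv_eq_add_integral c hcI x (hcbI hx) hx.1).2, hv'c, zero_add]
  · filter_upwards [hineq] with t ht htcb
    exact ht (hcbI (Ioc_subset_Icc_self htcb)) (hcb_pos t htcb)
      (hcb_small t (Ioc_subset_Icc_self htcb)).1 (hcb_small t (Ioc_subset_Icc_self htcb)).2

theorem eq_zero_of_eq_zero (hv : IsW21LocOn v v' v'' α ω) (hG : ConditionG ε G G')
    (hv_nonneg : ∀ t ∈ Ioo α ω, 0 ≤ v t)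
    (hineq : ∀ᵐ t, t ∈ Ioo α ω → 0 < v t → v t ≤ ε → |v' t| ≤ ε → 0 ≤ v'' t ∧ v'' t ≤ G' (v t))
    {t₀ t₁ : ℝ} (ht₀ : t₀ ∈ Ioo α ω) (ht₁ : t₁ ∈ Ioo α ω) (hv₀ : v t₀ = 0) : v t₁ = 0 := by
  rcases le_total t₀ t₁ with h01 | h10
  · exact hv.eq_zero_of_eq_zero_of_le hG hv_nonneg hineq ht₀ ht₁ h01 hv₀
  have hineq_neg : ∀ᵐ t, t ∈ Ioo (-ω) (-α) → 0 < v (-t) → v (-t) ≤ ε → |-v' (-t)| ≤ ε →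
      0 ≤ v'' (-t) ∧ v'' (-t) ≤ G' (v (-t)) := by
    filter_upwards [(Measure.measurePreserving_neg volume).quasiMeasurePreserving.ae hineq]
      with t ht
    simpa only [abs_neg, neg_mem_Ioo_iff] using ht
  simpa using hv.comp_neg.eq_zero_of_eq_zero_of_le hG
    (fun t ht => hv_nonneg (-t) (neg_mem_Ioo_iff.mpr ht)) hineq_neg
    (neg_mem_Ioo_iff.mp (by simpa using ht₀)) (neg_mem_Ioo_iff.mp (by simpa using ht₁))
    (neg_le_neg h10) (by simpa using hv₀)

end IsW21LocOn

theorem strong_maximum_principle_interior_positivity_general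
    (α ω : ℝ)
    (g : ℝ → ℝ → ℝ → ℝ) (v v' v'' : ℝ → ℝ)
    -- v ∈ W^{2,1}_loc(α,ω): v is C¹ on (α,ω) and v' is locally absolutely continuous there,
    -- with almost-everywhere derivative v''
    (hv_deriv : ∀ x ∈ Ioo α ω, HasDerivAt v (v' x) x)
    (hv'_cont : ContinuousOn v' (Ioo α ω))
    (hv'_locAC : ∀ c d : ℝ, α < c → c ≤ d → d < ω →
      IntegrableOn v'' (Icc c d) ∧ ∀ x ∈ Icc c d, v' x = v' c + ∫ t in c..x, v'' t)
    -- v nonnegative and not identically zero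
    (hv_nonneg : ∀ t ∈ Icc α ω, 0 ≤ v t)
    (hv_nontriv : ∃ t ∈ Ioo α ω, v t ≠ 0)
    -- the differential equation v'' = g(t, v, v') a.e. in (α,ω)
    (hode : ∀ᵐ t ∂volume, t ∈ Ioo α ω → v'' t = g t (v t) (v' t))
    -- condition (G): G is absolutely continuous on [0,ε] with a.e. derivative G'
    (hG : ∃ ε > (0:ℝ), ∃ G G' : ℝ → ℝ,
      IntegrableOn G' (Icc 0 ε) ∧
      (∀ s ∈ Icc (0:ℝ) ε, G s = G 0 + ∫ r in (0:ℝ)..s, G' r) ∧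
      (∀ᵐ t ∂volume, t ∈ Ioo α ω → 0 < v t → v t ≤ ε → |v' t| ≤ ε →
        0 ≤ g t (v t) (v' t) ∧ g t (v t) (v' t) ≤ G' (v t)) ∧
      ((∀ s ∈ Ioc (0:ℝ) ε, G s = 0) ∨
        ((∀ s ∈ Ioc (0:ℝ) ε, 0 < G s) ∧
          ¬ IntegrableOn (fun s => 1 / Real.sqrt (G s)) (Ioc 0 ε)))) :
    ∀ t ∈ Ioo α ω, 0 < v t := by
  obtain ⟨ε, hε, G, G', hG'_int, hG_eq, hg_le, hG_dich⟩ := hG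
  have hv : IsW21LocOn v v' v'' α ω := ⟨hv_deriv, hv'_cont, fun x hx y hy hxy =>
    ⟨(intervalIntegrable_iff_integrableOn_Icc_of_le hxy).mpr (hv'_locAC x y hx.1 hxy hy.2).1,
      (hv'_locAC x y hx.1 hxy hy.2).2 y ⟨hxy, le_rfl⟩⟩⟩
  have hineq : ∀ᵐ t, t ∈ Ioo α ω → 0 < v t → v t ≤ ε → |v' t| ≤ ε →
      0 ≤ v'' t ∧ v'' t ≤ G' (v t) := by
    filter_upwards [hode, hg_le] with t hode_t hg_le_t ht
    rw [hode_t ht]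
    exact hg_le_t ht
  intro t ht
  obtain ⟨t₁, ht₁, hv₁⟩ := hv_nontriv
  refine (hv_nonneg t (Ioo_subset_Icc_self ht)).lt_of_ne' fun hvt => hv₁ ?_
  exact hv.eq_zero_of_eq_zero ⟨hε, hG'_int, hG_eq, hG_dich⟩
    (fun s hs => hv_nonneg s (Ioo_subset_Icc_self hs)) hineq ht ht₁ hvt

/-- **Strong maximum principle, interior positivity (Theorem 2.1(i)).**
`v ∈ W^{2,1}_loc(α,ω) ∩ W^{1,1}(α,ω)` is a nontrivial nonnegative solution of
`v'' = g(t, v, v')` a.e. in `(α,ω)`; under condition (G), `v > 0` on `(α,ω)`. -/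
theorem strong_maximum_principle_interior_positivity
    (α ω : ℝ) (hαω : α < ω)
    (g : ℝ → ℝ → ℝ → ℝ) (v v' v'' : ℝ → ℝ)
    -- v ∈ W^{1,1}(α,ω): v is absolutely continuous on [α,ω] with derivative v' ∈ L¹(α,ω)
    (hv_cont : ContinuousOn v (Icc α ω))
    (hv'_int : IntegrableOn v' (Ioo α ω))
    (hv_ftc : ∀ x ∈ Icc α ω, v x = v α + ∫ t in α..x, v' t)
    -- v ∈ W^{2,1}_loc(α,ω): v is C¹ on (α,ω) and v' is locally absolutely continuous there,
    -- with almost-everywhere derivative v''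
    (hv_deriv : ∀ x ∈ Ioo α ω, HasDerivAt v (v' x) x)
    (hv'_cont : ContinuousOn v' (Ioo α ω))
    (hv'_locAC : ∀ c d : ℝ, α < c → c ≤ d → d < ω →
      IntegrableOn v'' (Icc c d) ∧ ∀ x ∈ Icc c d, v' x = v' c + ∫ t in c..x, v'' t)
    -- v nonnegative and not identically zero
    (hv_nonneg : ∀ t ∈ Icc α ω, 0 ≤ v t)
    (hv_nontriv : ∃ t ∈ Ioo α ω, v t ≠ 0)
    -- the differential equation v'' = g(t, v, v') a.e. in (α,ω)
    (hode : ∀ᵐ t ∂volume, t ∈ Ioo α ω → v'' t = g t (v t) (v' t))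
    -- condition (G): G is absolutely continuous on [0,ε] with a.e. derivative G'
    (hG : ∃ ε > (0:ℝ), ∃ G G' : ℝ → ℝ,
      IntegrableOn G' (Icc 0 ε) ∧
      (∀ s ∈ Icc (0:ℝ) ε, G s = G 0 + ∫ r in (0:ℝ)..s, G' r) ∧
      (∀ᵐ t ∂volume, t ∈ Ioo α ω → 0 < v t → v t ≤ ε → |v' t| ≤ ε →
        0 ≤ g t (v t) (v' t) ∧ g t (v t) (v' t) ≤ G' (v t)) ∧
      ((∀ s ∈ Ioc (0:ℝ) ε, G s = 0) ∨
        ((∀ s ∈ Ioc (0:ℝ) ε, 0 < G s) ∧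
          ¬ IntegrableOn (fun s => 1 / Real.sqrt (G s)) (Ioc 0 ε)))) :
    ∀ t ∈ Ioo α ω, 0 < v t :=
  strong_maximum_principle_interior_positivity_general α ω g v v' v'' hv_deriv hv'_cont hv'_locAC
    hv_nonneg hv_nontriv hode hG
end

section
/- Strong maximum principle, boundary point lemma at the left endpoint (Theorem 2.1(ii)). Let g : (α,ω) × ℝ × ℝ → ℝ be an arbitrary function and let v ∈ W^{2,1}_loc(α,ω) ∩ W^{1,1}(α,ω) be a nonnegative function, not identically zero, with v''(t) = g(t, v(t), v'(t)) for almost every t ∈ (α,ω). Assume condition (G): there exist a constant ε > 0 and an absolutely continuous function G : [0,ε] → ℝ such that 0 ≤ g(t, v(t), v'(t)) ≤ G'(v(t)) for almost every t ∈ (α,ω) at which 0 < v(t) ≤ ε and |v'(t)| ≤ ε, and either G(s) = 0 for all s ∈ (0,ε], or G(s) > 0 for all s ∈ (0,ε] and ∫₀^ε ds/√(G(s)) = +∞. If the continuous extension of v to [α,ω] satisfies v(α) = 0 and the limit v'(α⁺) = lim_{t→α⁺} v'(t) exists in ℝ, then v'(α⁺) > 0. -/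
/-!
The limit `L = v'(α⁺)` cannot be negative since `v ≥ 0 = v(α)`; suppose `L = 0`. Let `a` be the
last zero of `v` before a point where `v > 0`. Then `v'(a⁺) = 0` too (at an interior zero `v` has a
minimum), and on a short interval `(a, b]` condition (G) gives `0 ≤ v'' ≤ G'(v)`. So `v'` is
nondecreasing and nonnegative there, and multiplying `v'' ≤ G'(v)` by `v'` and substituting
`s = v(x)` gives the energy bound `v'² ≤ 2 (G(v) - G(0))`.

If `G(v(t)) = G(0)` for some `t ∈ (a, b]`, then `v' = 0` on `(a, t]` and `v(t) = v(a) = 0`, which is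
absurd. Hence `G(v) > G(0)` on `(a, b]`, which excludes `G ≡ 0`; and `v' / √(G(v) - G(0)) ≤ √2`, so
substituting `s = v(x)` once more shows `∫₀^{v(b)} ds / √(G s) < ∞`, contradicting (G).
-/

open Set Filter MeasureTheory Topology intervalIntegral

theorem sq_sub_sq_eq_two_mul_integral {w f : ℝ → ℝ} {a b : ℝ}
    (hf : IntervalIntegrable f volume a b)
    (hw : ∀ x ∈ uIcc a b, w x = w a + ∫ t in a..x, f t) :
    w b ^ 2 - w a ^ 2 = 2 * ∫ x in a..b, w x * f x := by
  set W : ℝ → ℝ := fun x => w a + ∫ t in a..x, f t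
  have hW : AbsolutelyContinuousOnInterval W a b :=
    (LipschitzWith.const (w a)).lipschitzOnWith.absolutelyContinuousOnInterval.fun_add
      (hf.absolutelyContinuousOnInterval_intervalIntegral left_mem_uIcc)
  have hderiv : ∀ᵐ x, x ∈ uIoc a b → deriv (W * W) x = 2 * (w x * f x) := by
    filter_upwards [hf.ae_hasDerivAt_integral] with x hx hxI
    have hWx := (hx (uIoc_subset_uIcc hxI) a left_mem_uIcc).const_add (w a)
    rw [(hWx.mul hWx).deriv, hw x (uIoc_subset_uIcc hxI)]
    ring
  have h := (hW.mul hW).integral_deriv_eq_sub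
  rw [integral_congr_ae hderiv, intervalIntegral.integral_const_mul] at h
  rw [h, hw b right_mem_uIcc]
  simp [W]
  ring

theorem MonotoneOn.le_of_tendsto_nhdsGT {f : ℝ → ℝ} {a b L : ℝ} (hf : MonotoneOn f (Ioc a b))
    (hL : Tendsto f (𝓝[>] a) (𝓝 L)) {x : ℝ} (hx : x ∈ Ioc a b) : L ≤ f x :=
  le_of_tendsto hL <| by
    filter_upwards [Ioc_mem_nhdsGT hx.1] with c hc using hf ⟨hc.1, hc.2.trans hx.2⟩ hx hc.2

theorem Ioo_min_max_subset_Ioo {a b t : ℝ} (hat : a ≤ t) (htb : t ≤ b) :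
    Ioo (min a t) (max a t) ⊆ Ioo a b := by
  rw [min_eq_left hat, max_eq_right hat]
  exact Ioo_subset_Ioo_right htb

theorem continuousOn_Icc_of_forall_eq_add_integral {G G' : ℝ → ℝ} {a b : ℝ} (hab : a ≤ b)
    (hG'_int : IntegrableOn G' (Icc a b)) (hG : ∀ s ∈ Icc a b, G s = G a + ∫ r in a..s, G' r) :
    ContinuousOn G (Icc a b) := by
  rw [← uIcc_of_le hab] at hG'_int ⊢
  exact (continuousOn_const.add (continuousOn_primitive_interval hG'_int)).congr
    (uIcc_of_le hab ▸ hG)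

theorem nonneg_of_tendsto_deriv_nhdsGT {v v' : ℝ → ℝ} {a b L : ℝ} (hab : a < b)
    (hv : ContinuousOn v (Icc a b)) (hv' : ∀ x ∈ Ioo a b, HasDerivAt v (v' x) x)
    (hv_nonneg : ∀ x ∈ Icc a b, 0 ≤ v x) (hva : v a = 0) (hL : Tendsto v' (𝓝[>] a) (𝓝 L)) :
    0 ≤ L := by
  by_contra! hL0
  obtain ⟨u, hu, hsub⟩ := mem_nhdsGT_iff_exists_Ioc_subset.1
    ((hL.eventually (gt_mem_nhds hL0)).and (Ioo_mem_nhdsGT hab))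
  have hub : u < b := (hsub (right_mem_Ioc.2 hu)).2.2
  obtain ⟨c, hc, hslope⟩ := exists_hasDerivAt_eq_slope v v' hu
    (hv.mono (Icc_subset_Icc_right hub.le)) fun x hx => hv' x ⟨hx.1, hx.2.trans hub⟩
  have hv'c : v' c < 0 := (hsub ⟨hc.1, hc.2.le⟩).1
  rw [hslope, hva, sub_zero] at hv'c
  exact (div_nonneg (hv_nonneg u ⟨hu.le, hub.le⟩) (sub_nonneg.2 hu.le)).not_gt hv'c

theorem exists_mem_Ico_eq_zero_forall_Ioc_ne {v : ℝ → ℝ} {a t : ℝ} (hat : a ≤ t)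
    (hv : ContinuousOn v (Icc a t)) (hva : v a = 0) (hvt : v t ≠ 0) :
    ∃ β ∈ Ico a t, v β = 0 ∧ ∀ x ∈ Ioc β t, v x ≠ 0 := by
  have hZ := hv.preimage_isClosed_of_isClosed isClosed_Icc (isClosed_singleton (x := 0))
  obtain ⟨β, ⟨hβ, hvβ⟩, hmax⟩ := (isCompact_Icc.of_isClosed_subset hZ inter_subset_left
    ).exists_isGreatest ⟨a, left_mem_Icc.2 hat, hva⟩
  refine ⟨β, ⟨hβ.1, hβ.2.lt_of_ne ?_⟩, hvβ, fun x hx hvx => ?_⟩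
  · rintro rfl
    exact hvt hvβ
  · exact (hmax ⟨Ioc_subset_Icc_self hx |> Icc_subset_Icc_left hβ.1, hvx⟩).not_gt hx.1

section BoundaryLayer

variable {v v' v'' G G' : ℝ → ℝ} {a b ε : ℝ}

theorem monotoneOn_of_forall_eq_add_integral
    (hv'_ftc : ∀ c ∈ Ioc a b, ∀ x ∈ Icc c b, v' x = v' c + ∫ t in c..x, v'' t)
    (hv''_nonneg : ∀ᵐ x, x ∈ Ioc a b → 0 ≤ v'' x) :
    MonotoneOn v' (Ioc a b) := by
  intro c hc x hx hcx
  rw [hv'_ftc c hc x ⟨hcx, hx.2⟩, integral_of_le hcx]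
  refine le_add_of_nonneg_right (setIntegral_nonneg_of_ae_restrict ?_)
  rw [EventuallyLE, ae_restrict_iff' measurableSet_Ioc]
  filter_upwards [hv''_nonneg] with t ht htI using ht ⟨hc.1.trans htI.1, htI.2.trans hx.2⟩

variable (hv : ContinuousOn v (Icc a b)) (hv' : ∀ x ∈ Ioo a b, HasDerivAt v (v' x) x)
  (hv'_nonneg : ∀ x ∈ Ioc a b, 0 ≤ v' x) (hva : v a = 0)
include hv hv' hv'_nonneg hva

theorem mapsTo_Ioc_Icc_of_deriv_nonneg : MapsTo v (Ioc a b) (Icc 0 (v b)) := by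
  have hmono : MonotoneOn v (Icc a b) := by
    refine monotoneOn_of_hasDerivWithinAt_nonneg (f' := v') (convex_Icc a b) hv ?_ ?_ <;>
      rw [interior_Icc] <;> intro x hx
    · exact (hv' x hx).hasDerivWithinAt
    · exact hv'_nonneg x (Ioo_subset_Ioc_self hx)
  intro x hx
  have hab : a ≤ b := hx.1.le.trans hx.2
  exact ⟨hva ▸ hmono (left_mem_Icc.2 hab) (Ioc_subset_Icc_self hx) hx.1.le,
    hmono (Ioc_subset_Icc_self hx) (right_mem_Icc.2 hab) hx.2⟩

theorem intervalIntegrable_comp_mul_deriv_iff_of_mem_Ioc {g : ℝ → ℝ} {t : ℝ} (ht : t ∈ Ioc a b) :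
    IntervalIntegrable (fun x => g (v x) * v' x) volume a t ↔
      IntervalIntegrable g volume 0 (v t) := by
  have hsub := Ioo_min_max_subset_Ioo ht.1.le ht.2
  rw [← hva]
  exact integrable_comp_mul_deriv_iff_of_deriv_nonneg
    (hv.mono (uIcc_of_le ht.1.le ▸ Icc_subset_Icc_right ht.2)) (fun x hx => hv' x (hsub hx))
    (fun x hx => hv'_nonneg x (Ioo_subset_Ioc_self (hsub hx)))

theorem integral_comp_mul_deriv_of_mem_Ioc {g : ℝ → ℝ} {t : ℝ} (ht : t ∈ Ioc a b) :
    ∫ x in a..t, g (v x) * v' x = ∫ s in 0..v t, g s := by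
  have hsub := Ioo_min_max_subset_Ioo ht.1.le ht.2
  rw [← hva]
  exact integral_comp_mul_deriv_of_deriv_nonneg
    (hv.mono (uIcc_of_le ht.1.le ▸ Icc_subset_Icc_right ht.2)) (fun x hx => hv' x (hsub hx))
    (fun x hx => hv'_nonneg x (Ioo_subset_Ioc_self (hsub hx)))

variable (hv'_cont : ContinuousOn v' (Ioc a b))
  (hv'_ftc : ∀ c ∈ Ioc a b, IntegrableOn v'' (Icc c b) ∧
    ∀ x ∈ Icc c b, v' x = v' c + ∫ t in c..x, v'' t)
  (hv'' : ∀ᵐ x, x ∈ Ioc a b → 0 ≤ v'' x ∧ v'' x ≤ G' (v x))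
  (hG'_int : IntegrableOn G' (Icc 0 ε)) (hG : ∀ s ∈ Icc 0 ε, G s = G 0 + ∫ r in 0..s, G' r)
  (hvb : v b ≤ ε)
include hv'_cont hv'_ftc hv'' hG'_int hG hvb

theorem sq_deriv_le_sq_add_two_mul_sub {c t : ℝ} (hc : c ∈ Ioc a b) (hct : c ≤ t) (htb : t ≤ b) :
    v' t ^ 2 ≤ v' c ^ 2 + 2 * (G (v t) - G 0) := by
  have ht : t ∈ Ioc a b := ⟨hc.1.trans_le hct, htb⟩
  have hIcc : Icc c t ⊆ Ioc a b := fun x hx => ⟨hc.1.trans_le hx.1, hx.2.trans htb⟩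
  have hvt : v t ∈ Icc 0 ε :=
    Icc_subset_Icc_right hvb (mapsTo_Ioc_Icc_of_deriv_nonneg hv hv' hv'_nonneg hva ht)
  have hGv_int : IntervalIntegrable (fun x => G' (v x) * v' x) volume a t :=
    (intervalIntegrable_comp_mul_deriv_iff_of_mem_Ioc hv hv' hv'_nonneg hva ht).2
      (hG'_int.mono_set (uIcc_of_le hvt.1 ▸ Icc_subset_Icc_right hvt.2)).intervalIntegrable
  have hv''_int : IntervalIntegrable v'' volume c t :=
    ((hv'_ftc c hc).1.mono_set (uIcc_of_le hct ▸ Icc_subset_Icc_right htb)).intervalIntegrable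
  have henergy := sq_sub_sq_eq_two_mul_integral hv''_int fun x hx =>
    (hv'_ftc c hc).2 x (Icc_subset_Icc_right htb (uIcc_of_le hct ▸ hx))
  have hv'v''_le : ∫ x in c..t, v' x * v'' x ≤ ∫ x in c..t, G' (v x) * v' x := by
    refine integral_mono_ae_restrict hct
      (hv''_int.continuousOn_mul (hv'_cont.mono (uIcc_of_le hct ▸ hIcc)))
      (hGv_int.mono_set (uIcc_of_le hct ▸ uIcc_of_le ht.1.le ▸ Icc_subset_Icc_left hc.1.le)) ?_
    rw [EventuallyLE, ae_restrict_iff' measurableSet_Icc]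
    filter_upwards [hv''] with x hx hxI
    rw [mul_comm (G' _)]
    exact mul_le_mul_of_nonneg_left (hx (hIcc hxI)).2 (hv'_nonneg x (hIcc hxI))
  have hGv_mono : ∫ x in c..t, G' (v x) * v' x ≤ ∫ x in a..t, G' (v x) * v' x := by
    refine integral_mono_interval hc.1.le hct le_rfl ?_ hGv_int
    rw [EventuallyLE, ae_restrict_iff' measurableSet_Ioc]
    filter_upwards [hv''] with x hx hxI
    have hxI' : x ∈ Ioc a b := ⟨hxI.1, hxI.2.trans htb⟩
    exact mul_nonneg ((hx hxI').1.trans (hx hxI').2) (hv'_nonneg x hxI')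
  have hGv : ∫ x in a..t, G' (v x) * v' x = G (v t) - G 0 := by
    rw [integral_comp_mul_deriv_of_mem_Ioc hv hv' hv'_nonneg hva ht, hG (v t) hvt]
    ring
  linarith

theorem sq_deriv_le_two_mul_sub (hv'_lim : Tendsto v' (𝓝[>] a) (𝓝 0)) {t : ℝ} (ht : t ∈ Ioc a b) :
    v' t ^ 2 ≤ 2 * (G (v t) - G 0) := by
  have hlim : Tendsto (fun c => v' c ^ 2 + 2 * (G (v t) - G 0)) (𝓝[>] a)
      (𝓝 (0 ^ 2 + 2 * (G (v t) - G 0))) :=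
    (hv'_lim.pow 2).add_const _
  rw [zero_pow two_ne_zero, zero_add] at hlim
  refine ge_of_tendsto hlim ?_
  filter_upwards [Ioc_mem_nhdsGT ht.1] with c hc
  exact sq_deriv_le_sq_add_two_mul_sub hv hv' hv'_nonneg hva hv'_cont hv'_ftc hv'' hG'_int hG hvb
    ⟨hc.1, hc.2.trans ht.2⟩ hc.2 ht.2

theorem G_zero_lt_G_comp (hv'_lim : Tendsto v' (𝓝[>] a) (𝓝 0))
    (hv_pos : ∀ x ∈ Ioc a b, 0 < v x) {t : ℝ} (ht : t ∈ Ioc a b) : G 0 < G (v t) := by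
  by_contra! hGt
  have hv't : v' t = 0 := pow_eq_zero_iff two_ne_zero |>.1 <| le_antisymm
    ((sq_deriv_le_two_mul_sub hv hv' hv'_nonneg hva hv'_cont hv'_ftc hv'' hG'_int hG hvb
      hv'_lim ht).trans (by linarith)) (sq_nonneg _)
  have hv'_mono := monotoneOn_of_forall_eq_add_integral (fun c hc => (hv'_ftc c hc).2)
    (hv''.mono fun x hx hxI => (hx hxI).1)
  obtain ⟨c, hc, hslope⟩ := exists_hasDerivAt_eq_slope v v' ht.1
    (hv.mono (Icc_subset_Icc_right ht.2)) fun x hx => hv' x ⟨hx.1, hx.2.trans_le ht.2⟩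
  have hcI : c ∈ Ioc a b := ⟨hc.1, hc.2.le.trans ht.2⟩
  have hv'c : v' c = 0 := le_antisymm (hv't ▸ hv'_mono hcI ht hc.2.le) (hv'_nonneg c hcI)
  rw [hv'c, hva, sub_zero, eq_comm, div_eq_zero_iff, sub_eq_zero] at hslope
  exact hslope.elim (hv_pos t ht).ne' ht.1.ne'

theorem integrableOn_inv_sqrt_sub (hab : a < b) (hv'_lim : Tendsto v' (𝓝[>] a) (𝓝 0))
    (hv_pos : ∀ x ∈ Ioc a b, 0 < v x) :
    IntegrableOn (fun s => (√(G s - G 0))⁻¹) (Ioc 0 (v b)) := by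
  have hGv_pos : ∀ x ∈ Ioc a b, 0 < G (v x) - G 0 := fun x hx => sub_pos.2 <|
    G_zero_lt_G_comp hv hv' hv'_nonneg hva hv'_cont hv'_ftc hv'' hG'_int hG hvb hv'_lim hv_pos hx
  have hvx : MapsTo v (Ioc a b) (Icc 0 ε) := fun x hx =>
    Icc_subset_Icc_right hvb (mapsTo_Ioc_Icc_of_deriv_nonneg hv hv' hv'_nonneg hva hx)
  have hG_cont := continuousOn_Icc_of_forall_eq_add_integral
    ((hv_pos b (right_mem_Ioc.2 hab)).le.trans hvb) hG'_int hG
  have hcont : ContinuousOn (fun x => (√(G (v x) - G 0))⁻¹ * v' x) (Ioc a b) :=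
    ((((hG_cont.comp (hv.mono Ioc_subset_Icc_self) hvx).sub continuousOn_const).sqrt).inv₀
      fun x hx => (Real.sqrt_pos.2 (hGv_pos x hx)).ne').mul hv'_cont
  have hbound : ∀ x ∈ Ioc a b, ‖(√(G (v x) - G 0))⁻¹ * v' x‖ ≤ √2 := fun x hx => by
    rw [Real.norm_of_nonneg (mul_nonneg (inv_nonneg.2 (Real.sqrt_nonneg _)) (hv'_nonneg x hx)),
      inv_mul_le_iff₀ (Real.sqrt_pos.2 (hGv_pos x hx)), ← Real.sqrt_mul (hGv_pos x hx).le, mul_comm]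
    exact (le_abs_self _).trans <| Real.abs_le_sqrt <|
      sq_deriv_le_two_mul_sub hv hv' hv'_nonneg hva hv'_cont hv'_ftc hv'' hG'_int hG hvb hv'_lim hx
  have hint : IntervalIntegrable (fun x => (√(G (v x) - G 0))⁻¹ * v' x) volume a b :=
    (intervalIntegrable_iff_integrableOn_Ioc_of_le hab.le).2 <|
      .of_bound measure_Ioc_lt_top (hcont.aestronglyMeasurable measurableSet_Ioc) √2
        ((ae_restrict_iff' measurableSet_Ioc).2 (ae_of_all _ hbound))
  exact (intervalIntegrable_iff_integrableOn_Ioc_of_le (hv_pos b (right_mem_Ioc.2 hab)).le).1 <|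
    (intervalIntegrable_comp_mul_deriv_iff_of_mem_Ioc hv hv' hv'_nonneg hva
      (right_mem_Ioc.2 hab)).1 hint

theorem integrableOn_one_div_sqrt (hab : a < b) (hv'_lim : Tendsto v' (𝓝[>] a) (𝓝 0))
    (hv_pos : ∀ x ∈ Ioc a b, 0 < v x) (hG0 : 0 ≤ G 0) (hG_pos : ∀ s ∈ Ioc 0 ε, 0 < G s) :
    IntegrableOn (fun s => 1 / √(G s)) (Ioc 0 ε) := by
  have hvb_pos : 0 < v b := hv_pos b (right_mem_Ioc.2 hab)
  have hG_cont := continuousOn_Icc_of_forall_eq_add_integral (hvb_pos.le.trans hvb) hG'_int hG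
  have hcont : ContinuousOn (fun s => 1 / √(G s)) (Ioc 0 ε) :=
    continuousOn_const.div ((hG_cont.mono Ioc_subset_Icc_self).sqrt) fun s hs =>
      (Real.sqrt_pos.2 (hG_pos s hs)).ne'
  have hH_pos : ∀ s ∈ Ioc 0 (v b), 0 < G s - G 0 := by
    intro s hs
    obtain ⟨t, ht, rfl⟩ := intermediate_value_Ioc hab.le hv (hva ▸ hs)
    exact sub_pos.2 <| G_zero_lt_G_comp hv hv' hv'_nonneg hva hv'_cont hv'_ftc hv'' hG'_int hG hvb
      hv'_lim hv_pos ht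
  have hsmall : IntegrableOn (fun s => 1 / √(G s)) (Ioc 0 (v b)) := by
    refine (integrableOn_inv_sqrt_sub hv hv' hv'_nonneg hva hv'_cont hv'_ftc hv'' hG'_int hG hvb
      hab hv'_lim hv_pos).mono' ((hcont.mono (Ioc_subset_Ioc_right hvb)).aestronglyMeasurable
        measurableSet_Ioc) ?_
    rw [ae_restrict_iff' measurableSet_Ioc]
    refine ae_of_all _ fun s hs => ?_
    rw [Real.norm_of_nonneg (by positivity), one_div]
    exact inv_anti₀ (Real.sqrt_pos.2 (hH_pos s hs)) (Real.sqrt_le_sqrt (by linarith))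
  have hlarge : IntegrableOn (fun s => 1 / √(G s)) (Icc (v b) ε) :=
    (hcont.mono fun s hs => ⟨hvb_pos.trans_le hs.1, hs.2⟩).integrableOn_Icc
  exact (hsmall.union hlarge).mono_set fun s hs =>
    (le_or_gt s (v b)).imp (fun h => ⟨hs.1, h⟩) fun h => ⟨h.le, hs.2⟩

end BoundaryLayer

theorem not_G_dichotomy {v v' v'' G G' : ℝ → ℝ} {a b ε : ℝ} (hab : a < b)
    (hv : ContinuousOn v (Icc a b)) (hv' : ∀ x ∈ Ioo a b, HasDerivAt v (v' x) x) (hva : v a = 0)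
    (hv_pos : ∀ x ∈ Ioc a b, 0 < v x) (hvb : v b ≤ ε) (hv'_cont : ContinuousOn v' (Ioc a b))
    (hv'_ftc : ∀ c ∈ Ioc a b, IntegrableOn v'' (Icc c b) ∧
      ∀ x ∈ Icc c b, v' x = v' c + ∫ t in c..x, v'' t)
    (hv'_lim : Tendsto v' (𝓝[>] a) (𝓝 0))
    (hv'' : ∀ᵐ x, x ∈ Ioc a b → 0 ≤ v'' x ∧ v'' x ≤ G' (v x))
    (hG'_int : IntegrableOn G' (Icc 0 ε)) (hG : ∀ s ∈ Icc 0 ε, G s = G 0 + ∫ r in 0..s, G' r) :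
    ¬ ((∀ s ∈ Ioc (0 : ℝ) ε, G s = 0) ∨
      ((∀ s ∈ Ioc (0 : ℝ) ε, 0 < G s) ∧ ¬ IntegrableOn (fun s => 1 / √(G s)) (Ioc 0 ε))) := by
  have hb : b ∈ Ioc a b := right_mem_Ioc.2 hab
  have hε : 0 < ε := (hv_pos b hb).trans_le hvb
  have hv'_nonneg : ∀ x ∈ Ioc a b, 0 ≤ v' x := fun x hx =>
    (monotoneOn_of_forall_eq_add_integral (fun c hc => (hv'_ftc c hc).2)
      (hv''.mono fun x hx hxI => (hx hxI).1)).le_of_tendsto_nhdsGT hv'_lim hx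
  have hG_lim : Tendsto G (𝓝[>] 0) (𝓝 (G 0)) :=
    ((continuousOn_Icc_of_forall_eq_add_integral hε.le hG'_int hG 0 (left_mem_Icc.2 hε.le)
      ).mono_of_mem_nhdsWithin (Icc_mem_nhdsGT hε)).tendsto
  rintro (hG_zero | ⟨hG_pos, hG_nonint⟩)
  · have hG0 : G 0 = 0 := tendsto_nhds_unique hG_lim <| tendsto_const_nhds.congr' <| by
      filter_upwards [Ioc_mem_nhdsGT hε] with s hs using (hG_zero s hs).symm
    have hGvb := G_zero_lt_G_comp hv hv' hv'_nonneg hva hv'_cont hv'_ftc hv'' hG'_int hG hvb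
      hv'_lim hv_pos hb
    rw [hG0, hG_zero (v b) ⟨hv_pos b hb, hvb⟩] at hGvb
    exact hGvb.false
  · refine hG_nonint (integrableOn_one_div_sqrt hv hv' hv'_nonneg hva hv'_cont hv'_ftc hv'' hG'_int
      hG hvb hab hv'_lim hv_pos ?_ hG_pos)
    exact ge_of_tendsto hG_lim <| by
      filter_upwards [Ioc_mem_nhdsGT hε] with s hs using (hG_pos s hs).le

theorem exists_boundary_layer {v v' : ℝ → ℝ} {α ω ε : ℝ} (hv : ContinuousOn v (Icc α ω))
    (hv' : ∀ x ∈ Ioo α ω, HasDerivAt v (v' x) x) (hv'_cont : ContinuousOn v' (Ioo α ω))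
    (hv_nonneg : ∀ x ∈ Icc α ω, 0 ≤ v x) (hv_nontriv : ∃ t ∈ Ioo α ω, v t ≠ 0) (hvα : v α = 0)
    (hv'α : Tendsto v' (𝓝[>] α) (𝓝 0)) (hε : 0 < ε) :
    ∃ a b, α ≤ a ∧ a < b ∧ b < ω ∧ v a = 0 ∧ Tendsto v' (𝓝[>] a) (𝓝 0) ∧
      ∀ x ∈ Ioc a b, 0 < v x ∧ v x ≤ ε ∧ |v' x| ≤ ε := by
  obtain ⟨t, ht, hvt⟩ := hv_nontriv
  obtain ⟨a, ha, hva, hv_ne⟩ := exists_mem_Ico_eq_zero_forall_Ioc_ne ht.1.le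
    (hv.mono (Icc_subset_Icc_right ht.2.le)) hvα hvt
  have haω : a < ω := ha.2.trans ht.2
  have hv'a : Tendsto v' (𝓝[>] a) (𝓝 0) := by
    rcases ha.1.eq_or_lt with rfl | hαa
    · exact hv'α
    · have hmin : IsLocalMin v a := Filter.eventually_of_mem (Icc_mem_nhds hαa haω) fun x hx =>
        hva ▸ hv_nonneg x hx
      rw [← hmin.hasDerivAt_eq_zero (hv' a ⟨hαa, haω⟩)]
      exact (hv'_cont.continuousAt (Ioo_mem_nhds hαa haω)).tendsto.mono_left nhdsWithin_le_nhds
  have hva_lim : Tendsto v (𝓝[>] a) (𝓝 0) :=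
    hva ▸ ((hv a ⟨ha.1, haω.le⟩).mono_of_mem_nhdsWithin (Icc_mem_nhdsGT_of_mem ⟨ha.1, haω⟩)).tendsto
  have hsmall : ∀ᶠ x in 𝓝[>] a, x ≤ t ∧ v x ≤ ε ∧ |v' x| ≤ ε :=
    (eventually_of_mem (Ioc_mem_nhdsGT ha.2) fun x hx => hx.2).and <|
      (hva_lim.eventually (eventually_le_nhds hε)).and <|
        (abs_zero (α := ℝ) ▸ hv'a.abs).eventually (eventually_le_nhds hε)
  obtain ⟨b, hab, hb⟩ := mem_nhdsGT_iff_exists_Ioc_subset.1 hsmall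
  refine ⟨a, b, ha.1, hab, (hb (right_mem_Ioc.2 hab)).1.trans_lt ht.2, hva, hv'a,
    fun x hx => ⟨?_, (hb hx).2⟩⟩
  exact (hv_nonneg x ⟨ha.1.trans hx.1.le, (hb hx).1.trans ht.2.le⟩).lt_of_ne
    (hv_ne x ⟨hx.1, (hb hx).1⟩).symm

theorem strong_maximum_principle_left_boundary_point_general
    (α ω : ℝ) (hαω : α < ω)
    (g : ℝ → ℝ → ℝ → ℝ) (v v' v'' : ℝ → ℝ)
    (hv_cont : ContinuousOn v (Icc α ω))
    -- v ∈ W^{2,1}_loc(α,ω): v is C¹ on (α,ω) and v' is locally absolutely continuous there,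
    -- with almost-everywhere derivative v''
    (hv_deriv : ∀ x ∈ Ioo α ω, HasDerivAt v (v' x) x)
    (hv'_cont : ContinuousOn v' (Ioo α ω))
    (hv'_locAC : ∀ c d : ℝ, α < c → c ≤ d → d < ω →
      IntegrableOn v'' (Icc c d) ∧ ∀ x ∈ Icc c d, v' x = v' c + ∫ t in c..x, v'' t)
    -- v nonnegative and not identically zero
    (hv_nonneg : ∀ t ∈ Icc α ω, 0 ≤ v t)
    (hv_nontriv : ∃ t ∈ Ioo α ω, v t ≠ 0)
    -- the differential equation v'' = g(t, v, v') a.e. in (α,ω)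
    (hode : ∀ᵐ t ∂volume, t ∈ Ioo α ω → v'' t = g t (v t) (v' t))
    -- condition (G): G is absolutely continuous on [0,ε] with a.e. derivative G'
    (hG : ∃ ε > (0:ℝ), ∃ G G' : ℝ → ℝ,
      IntegrableOn G' (Icc 0 ε) ∧
      (∀ s ∈ Icc (0:ℝ) ε, G s = G 0 + ∫ r in (0:ℝ)..s, G' r) ∧
      (∀ᵐ t ∂volume, t ∈ Ioo α ω → 0 < v t → v t ≤ ε → |v' t| ≤ ε →
        0 ≤ g t (v t) (v' t) ∧ g t (v t) (v' t) ≤ G' (v t)) ∧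
      ((∀ s ∈ Ioc (0:ℝ) ε, G s = 0) ∨
        ((∀ s ∈ Ioc (0:ℝ) ε, 0 < G s) ∧
          ¬ IntegrableOn (fun s => 1 / Real.sqrt (G s)) (Ioc 0 ε))))
    -- boundary behavior: v(α) = 0 and v'(α⁺) = L exists
    (hvα : v α = 0)
    (L : ℝ) (hL : Tendsto v' (𝓝[>] α) (𝓝 L)) :
    0 < L := by
  obtain ⟨ε, hε, G, G', hG'_int, hG, hg, hG_cases⟩ := hG
  refine (nonneg_of_tendsto_deriv_nhdsGT hαω hv_cont hv_deriv hv_nonneg hvα hL).lt_of_ne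
    fun hL0 => ?_
  obtain ⟨a, b, hαa, hab, hbω, hva, hv'_lim, hv_ab⟩ := exists_boundary_layer hv_cont hv_deriv
    hv'_cont hv_nonneg hv_nontriv hvα (hL0 ▸ hL) hε
  have hsub : Ioc a b ⊆ Ioo α ω := fun x hx => ⟨hαa.trans_lt hx.1, hx.2.trans_lt hbω⟩
  refine not_G_dichotomy hab (hv_cont.mono (Icc_subset_Icc hαa hbω.le))
    (fun x hx => hv_deriv x (hsub (Ioo_subset_Ioc_self hx))) hva (fun x hx => (hv_ab x hx).1)
    (hv_ab b (right_mem_Ioc.2 hab)).2.1 (hv'_cont.mono hsub)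
    (fun c hc => hv'_locAC c b (hαa.trans_lt hc.1) hc.2 hbω) hv'_lim ?_ hG'_int hG hG_cases
  filter_upwards [hode, hg] with x hode hg hx
  rw [hode (hsub hx)]
  exact hg (hsub hx) (hv_ab x hx).1 (hv_ab x hx).2.1 (hv_ab x hx).2.2

/-- **Strong maximum principle, boundary point lemma at the left endpoint (Theorem 2.1(ii)).**
`v ∈ W^{2,1}_loc(α,ω) ∩ W^{1,1}(α,ω)` is a nontrivial nonnegative solution of
`v'' = g(t, v, v')` a.e. in `(α,ω)`; under condition (G), if `v(α) = 0` and `v'(α⁺)` exists, then `v'(α⁺) > 0`. -/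
theorem strong_maximum_principle_left_boundary_point
    (α ω : ℝ) (hαω : α < ω)
    (g : ℝ → ℝ → ℝ → ℝ) (v v' v'' : ℝ → ℝ)
    -- v ∈ W^{1,1}(α,ω): v is absolutely continuous on [α,ω] with derivative v' ∈ L¹(α,ω)
    (hv_cont : ContinuousOn v (Icc α ω))
    (hv'_int : IntegrableOn v' (Ioo α ω))
    (hv_ftc : ∀ x ∈ Icc α ω, v x = v α + ∫ t in α..x, v' t)
    -- v ∈ W^{2,1}_loc(α,ω): v is C¹ on (α,ω) and v' is locally absolutely continuous there,
    -- with almost-everywhere derivative v''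
    (hv_deriv : ∀ x ∈ Ioo α ω, HasDerivAt v (v' x) x)
    (hv'_cont : ContinuousOn v' (Ioo α ω))
    (hv'_locAC : ∀ c d : ℝ, α < c → c ≤ d → d < ω →
      IntegrableOn v'' (Icc c d) ∧ ∀ x ∈ Icc c d, v' x = v' c + ∫ t in c..x, v'' t)
    -- v nonnegative and not identically zero
    (hv_nonneg : ∀ t ∈ Icc α ω, 0 ≤ v t)
    (hv_nontriv : ∃ t ∈ Ioo α ω, v t ≠ 0)
    -- the differential equation v'' = g(t, v, v') a.e. in (α,ω)
    (hode : ∀ᵐ t ∂volume, t ∈ Ioo α ω → v'' t = g t (v t) (v' t))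
    -- condition (G): G is absolutely continuous on [0,ε] with a.e. derivative G'
    (hG : ∃ ε > (0:ℝ), ∃ G G' : ℝ → ℝ,
      IntegrableOn G' (Icc 0 ε) ∧
      (∀ s ∈ Icc (0:ℝ) ε, G s = G 0 + ∫ r in (0:ℝ)..s, G' r) ∧
      (∀ᵐ t ∂volume, t ∈ Ioo α ω → 0 < v t → v t ≤ ε → |v' t| ≤ ε →
        0 ≤ g t (v t) (v' t) ∧ g t (v t) (v' t) ≤ G' (v t)) ∧
      ((∀ s ∈ Ioc (0:ℝ) ε, G s = 0) ∨
        ((∀ s ∈ Ioc (0:ℝ) ε, 0 < G s) ∧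
          ¬ IntegrableOn (fun s => 1 / Real.sqrt (G s)) (Ioc 0 ε))))
    -- boundary behavior: v(α) = 0 and v'(α⁺) = L exists
    (hvα : v α = 0)
    (L : ℝ) (hL : Tendsto v' (𝓝[>] α) (𝓝 L)) :
    0 < L :=
  strong_maximum_principle_left_boundary_point_general α ω hαω g v v' v'' hv_cont hv_deriv hv'_cont
    hv'_locAC hv_nonneg hv_nontriv hode hG hvα L hL
end

section
/- Strong maximum principle, boundary point lemma at the right endpoint (Theorem 2.1(iii)). Let g : (α,ω) × ℝ × ℝ → ℝ be an arbitrary function and let v ∈ W^{2,1}_loc(α,ω) ∩ W^{1,1}(α,ω) be a nonnegative function, not identically zero, with v''(t) = g(t, v(t), v'(t)) for almost every t ∈ (α,ω). Assume condition (G): there exist a constant ε > 0 and an absolutely continuous function G : [0,ε] → ℝ such that 0 ≤ g(t, v(t), v'(t)) ≤ G'(v(t)) for almost every t ∈ (α,ω) at which 0 < v(t) ≤ ε and |v'(t)| ≤ ε, and either G(s) = 0 for all s ∈ (0,ε], or G(s) > 0 for all s ∈ (0,ε] and ∫₀^ε ds/√(G(s)) = +∞. If the continuous extension of v to [α,ω]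 satisfies v(ω) = 0 and the limit v'(ω⁻) = lim_{t→ω⁻} v'(t) exists in ℝ, then v'(ω⁻) < 0. -/
/-!
Suppose `v'(ω⁻) ≥ 0`. Let `b` be the first zero of `v` to the right of a point where `v > 0`;
both `v` and `v'` tend to `0` at `b⁻` (at an interior `b` because `b` is a minimum of `v ≥ 0`,
at `b = ω` because a positive slope would make `v` negative to the left of `ω`). Just left of
`b`, `v > 0` is small with small slope, so `0 ≤ v'' ≤ G'(v)`: `v'` increases to `0`, hence
`v' ≤ 0`. Multiplying `v'' ≤ G'(v)` by `-2v' ≥ 0` and substituting `u = v(x)` gives the energy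
bound `v'² ≤ 2 (G(v) - G(0)) ≤ 2 G(v)`. If `G ≡ 0` this forces `v' ≡ 0`, so `v` is a positive
constant tending to `0`. Otherwise `-v' / √(G(v)) ≤ √2`, and the same substitution bounds
`∫ du / √(G u)` near `0` by `√2 (b - s)`, contradicting the divergence of that integral.
-/

open Set Filter MeasureTheory Topology

def ConditionG_s2 (G : ℝ → ℝ) (ε : ℝ) : Prop :=
  (∀ s ∈ Ioc 0 ε, G s = 0) ∨
    ((∀ s ∈ Ioc 0 ε, 0 < G s) ∧ ¬ IntegrableOn (fun s => 1 / √(G s)) (Ioc 0 ε))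

theorem ConditionG_s2.nonneg {G : ℝ → ℝ} {ε : ℝ} (h : ConditionG_s2 G ε) : ∀ y ∈ Ioc 0 ε, 0 ≤ G y := by
  rcases h with hG | ⟨hG, -⟩
  · exact fun y hy => (hG y hy).ge
  · exact fun y hy => (hG y hy).le

theorem continuousOn_Icc_of_eq_add_integral {G G' : ℝ → ℝ} {a b : ℝ} (hab : a ≤ b)
    (hG' : IntegrableOn G' (Icc a b)) (hG : ∀ y ∈ Icc a b, G y = G a + ∫ r in a..y, G' r) :
    ContinuousOn G (Icc a b) := by
  have h := intervalIntegral.continuousOn_primitive_interval (by rwa [uIcc_of_le hab])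
  rw [uIcc_of_le hab] at h
  exact (continuousOn_const.add h).congr hG

theorem monotoneOn_of_eq_add_integral_of_ae_nonneg {w h : ℝ → ℝ} {s b : ℝ}
    (hw : ∀ c d, s < c → c ≤ d → d < b → w d = w c + ∫ t in c..d, h t)
    (hh : ∀ᵐ t, t ∈ Ioo s b → 0 ≤ h t) : MonotoneOn w (Ioo s b) := by
  intro c hc d hd hcd
  rw [hw c d hc.1 hcd hd.2]
  refine le_add_of_nonneg_right (intervalIntegral.integral_nonneg_of_ae_restrict hcd ?_)
  filter_upwards [ae_restrict_mem measurableSet_Icc, ae_restrict_of_ae hh] with t ht hnn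
  exact hnn ⟨hc.1.trans_le ht.1, ht.2.trans_lt hd.2⟩

theorem integrableOn_Ioc_of_forall_integral_le {f : ℝ → ℝ} {a c C : ℝ} (hac : a < c)
    (hf : ContinuousOn f (Ioc a c)) (hf_nonneg : ∀ x ∈ Ioc a c, 0 ≤ f x)
    (hC : ∀ x ∈ Ioo a c, ∫ u in x..c, f u ≤ C) : IntegrableOn f (Ioc a c) := by
  set x : ℕ → ℝ := fun n => a + (c - a) / 2 * (1 / (n + 1))
  have hx : ∀ n, x n ∈ Ioo a c := by
    intro n
    have h₀ : 0 < 1 / ((n : ℝ) + 1) := by positivity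
    have h₁ : 1 / ((n : ℝ) + 1) ≤ 1 := by
      rw [div_le_one (by positivity)]; linarith [n.cast_nonneg (α := ℝ)]
    constructor <;> dsimp only [x] <;> nlinarith
  have hx_lim : Tendsto x atTop (𝓝 a) := by
    simpa [x] using tendsto_const_nhds.add
      (tendsto_one_div_add_atTop_nhds_zero_nat.const_mul ((c - a) / 2))
  refine integrableOn_Ioc_of_intervalIntegral_norm_bounded_left (I := C)
    (fun n => ?_) hx_lim (Eventually.of_forall fun n => ?_)
  · exact (hf.mono (Icc_subset_Ioc (hx n).1 le_rfl)).integrableOn_Icc.mono_set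
      Ioc_subset_Icc_self
  · calc ∫ u in Ioc (x n) c, ‖f u‖ = ∫ u in x n..c, f u := by
          rw [intervalIntegral.integral_of_le (hx n).2.le]
          refine setIntegral_congr_fun measurableSet_Ioc fun u hu => ?_
          exact Real.norm_of_nonneg (hf_nonneg u ⟨(hx n).1.trans hu.1, hu.2⟩)
      _ ≤ C := hC _ (hx n)

theorem integral_two_mul_mul_eq_sq_sub_sq {w h : ℝ → ℝ} {a b : ℝ} (hab : a ≤ b)
    (hh : IntervalIntegrable h volume a b)
    (hw : ∀ x ∈ Icc a b, w x = w a + ∫ t in a..x, h t) :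
    ∫ x in a..b, 2 * w x * h x = w b ^ 2 - w a ^ 2 := by
  set W : ℝ → ℝ := fun x => w a + ∫ t in a..x, h t
  have hW : AbsolutelyContinuousOnInterval W a b :=
    (LipschitzWith.const (w a)).lipschitzOnWith.absolutelyContinuousOnInterval.fun_add
      (hh.absolutelyContinuousOnInterval_intervalIntegral left_mem_uIcc)
  have hWw : ∀ x ∈ Icc a b, W x = w x := fun x hx => (hw x hx).symm
  rw [← hWw a (left_mem_Icc.2 hab), ← hWw b (right_mem_Icc.2 hab), sq, sq,
    ← hW.integral_deriv_mul_eq_sub hW]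
  refine intervalIntegral.integral_congr_ae ?_
  filter_upwards [hh.ae_hasDerivAt_integral] with x hx hxab
  rw [uIoc_of_le hab] at hxab
  have hxI : x ∈ uIcc a b := uIoc_subset_uIcc (by rwa [uIoc_of_le hab])
  have hd : deriv W x = h x := ((hx hxI a left_mem_uIcc).const_add (w a)).deriv
  rw [hd, hWw x (Ioc_subset_Icc_self hxab)]
  ring

theorem sq_sub_sq_le_two_mul_integral_of_deriv_nonpos {v v' v'' G' : ℝ → ℝ} {t τ : ℝ}
    (htτ : t ≤ τ) (hv : ∀ x ∈ Icc t τ, HasDerivAt v (v' x) x)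
    (hv'_nonpos : ∀ x ∈ Icc t τ, v' x ≤ 0) (hv'' : IntervalIntegrable v'' volume t τ)
    (hv'_eq : ∀ x ∈ Icc t τ, v' x = v' t + ∫ r in t..x, v'' r)
    (hv''_le : ∀ᵐ x, x ∈ Icc t τ → v'' x ≤ G' (v x))
    (hG' : IntervalIntegrable G' volume (v τ) (v t)) :
    v' t ^ 2 - v' τ ^ 2 ≤ 2 * ∫ u in v τ..v t, G' u := by
  have hIoo : Ioo (min t τ) (max t τ) ⊆ Icc t τ := by
    rw [min_eq_left htτ, max_eq_right htτ]; exact Ioo_subset_Icc_self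
  have hv_cont : ContinuousOn v (uIcc t τ) := by
    rw [uIcc_of_le htτ]; exact fun x hx => (hv x hx).continuousAt.continuousWithinAt
  have hv'_cont : ContinuousOn v' (uIcc t τ) := by
    rw [uIcc_of_le htτ]
    refine (continuousOn_const.add ?_).congr hv'_eq
    simpa only [uIcc_of_le htτ] using
      intervalIntegral.continuousOn_primitive_interval ((intervalIntegrable_iff' (f := v'')).1 hv'')
  have hderiv : ∀ x ∈ Ioo (min t τ) (max t τ), HasDerivAt v (v' x) x := fun x hx => hv x (hIoo hx)
  have hnonpos : ∀ x ∈ Ioo (min t τ) (max t τ), v' x ≤ 0 := fun x hx => hv'_nonpos x (hIoo hx)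
  have hsubst :=
    intervalIntegral.integral_comp_mul_deriv_of_deriv_nonpos (g := G') hv_cont hderiv hnonpos
  have hint :=
    (intervalIntegral.integrable_comp_mul_deriv_iff_of_deriv_nonpos hv_cont hderiv hnonpos).2
      hG'.symm
  have hcompare : ∫ x in t..τ, 2 * ((G' ∘ v) x * v' x) ≤ ∫ x in t..τ, 2 * v' x * v'' x := by
    refine intervalIntegral.integral_mono_ae_restrict htτ (hint.const_mul 2)
      ((hv''.continuousOn_mul hv'_cont).const_mul 2 |>.congr ?_) ?_
    · exact fun x _ => by ring
    · filter_upwards [(ae_restrict_iff' measurableSet_Icc).2 hv''_le,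
        ae_restrict_mem measurableSet_Icc] with x hle hx
      have := hv'_nonpos x hx
      simp only [Function.comp_apply]
      nlinarith
  rw [intervalIntegral.integral_const_mul, hsubst,
    integral_two_mul_mul_eq_sq_sub_sq htτ hv'' hv'_eq, intervalIntegral.integral_symm] at hcompare
  linarith

section BoundaryLayer

variable {s b ε : ℝ} {v v' v'' G G' : ℝ → ℝ}

theorem eq_zero_of_hasDerivAt_zero_of_tendsto_nhdsLT (hv : ∀ x ∈ Ioo s b, HasDerivAt v 0 x)
    (hvb : Tendsto v (𝓝[<] b) (𝓝 0)) {t : ℝ} (ht : t ∈ Ioo s b) : v t = 0 := by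
  have hv_const : ∀ x ∈ Ioo s b, v x = v t := fun x hx =>
    isOpen_Ioo.is_const_of_deriv_eq_zero isPreconnected_Ioo
      (fun y hy => (hv y hy).differentiableAt.differentiableWithinAt)
      (fun y hy => (hv y hy).deriv) hx ht
  have hvt : Tendsto v (𝓝[<] b) (𝓝 (v t)) := tendsto_const_nhds.congr'
    (eventually_of_mem (Ioo_mem_nhdsLT (ht.1.trans ht.2)) fun x hx => (hv_const x hx).symm)
  exact tendsto_nhds_unique hvt hvb

theorem sq_deriv_le_two_mul_sub_of_tendsto_nhdsLT
    (hv : ∀ x ∈ Ioo s b, HasDerivAt v (v' x) x)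
    (hv'' : ∀ c d, s < c → c ≤ d → d < b →
      IntegrableOn v'' (Icc c d) ∧ ∀ x ∈ Icc c d, v' x = v' c + ∫ r in c..x, v'' r)
    (hv'_nonpos : ∀ x ∈ Ioo s b, v' x ≤ 0) (hv''_le : ∀ᵐ x, x ∈ Ioo s b → v'' x ≤ G' (v x))
    (hv_mem : ∀ x ∈ Ioo s b, v x ∈ Icc 0 ε) (hG' : IntegrableOn G' (Icc 0 ε))
    (hG : ∀ y ∈ Icc 0 ε, G y = G 0 + ∫ r in 0..y, G' r)
    (hvb : Tendsto v (𝓝[<] b) (𝓝 0)) (hv'b : Tendsto v' (𝓝[<] b) (𝓝 0))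
    {t : ℝ} (ht : t ∈ Ioo s b) : v' t ^ 2 ≤ 2 * (G (v t) - G 0) := by
  have hε : 0 ≤ ε := (hv_mem t ht).1.trans (hv_mem t ht).2
  have hG'_ii : ∀ y ∈ Icc 0 ε, ∀ z ∈ Icc 0 ε, IntervalIntegrable G' volume y z :=
    fun y hy z hz => (hG'.mono_set (uIcc_subset_Icc hy hz)).intervalIntegrable
  have henergy : ∀ τ ∈ Ioo t b, v' t ^ 2 - v' τ ^ 2 ≤ 2 * (G (v t) - G (v τ)) := by
    intro τ hτ
    have hsub : Icc t τ ⊆ Ioo s b := Icc_subset_Ioo ht.1 hτ.2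
    obtain ⟨hv''_int, hv'_eq⟩ := hv'' t τ ht.1 hτ.1.le hτ.2
    have hvτ := hv_mem τ (hsub (right_mem_Icc.2 hτ.1.le))
    have h := sq_sub_sq_le_two_mul_integral_of_deriv_nonpos hτ.1.le
      (fun x hx => hv x (hsub hx)) (fun x hx => hv'_nonpos x (hsub hx))
      ((intervalIntegrable_iff_integrableOn_Icc_of_le hτ.1.le).2 hv''_int) hv'_eq
      (by filter_upwards [hv''_le] with x hx hxI using hx (hsub hxI))
      (hG'_ii _ hvτ _ (hv_mem t ht))
    rw [← intervalIntegral.integral_interval_sub_left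
      (hG'_ii 0 (left_mem_Icc.2 hε) _ (hv_mem t ht)) (hG'_ii 0 (left_mem_Icc.2 hε) _ hvτ)] at h
    rw [hG _ (hv_mem t ht), hG _ hvτ]
    linarith
  have hGv : Tendsto (fun τ => G (v τ)) (𝓝[<] b) (𝓝 (G 0)) :=
    ((continuousOn_Icc_of_eq_add_integral hε hG' hG) 0 (left_mem_Icc.2 hε)).tendsto.comp
      (tendsto_nhdsWithin_iff.2 ⟨hvb, eventually_of_mem (Ioo_mem_nhdsLT (ht.1.trans ht.2)) hv_mem⟩)
  have hlim := (hv'b.pow 2).add ((tendsto_const_nhds (x := G (v t)).sub hGv).const_mul 2)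
  rw [zero_pow two_ne_zero, zero_add] at hlim
  refine ge_of_tendsto hlim ?_
  filter_upwards [Ioo_mem_nhdsLT ht.2] with τ hτ
  linarith [henergy τ hτ]

theorem integrableOn_one_div_sqrt_of_sq_deriv_le (hsb : s < b)
    (hv : ∀ x ∈ Ioo s b, HasDerivAt v (v' x) x) (hv'_cont : ContinuousOn v' (Ioo s b))
    (hv'_nonpos : ∀ x ∈ Ioo s b, v' x ≤ 0) (hv_mem : ∀ x ∈ Ioo s b, v x ∈ Ioc 0 ε)
    (hvb : Tendsto v (𝓝[<] b) (𝓝 0)) (hG_cont : ContinuousOn G (Ioc 0 ε))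
    (hG_pos : ∀ y ∈ Ioc 0 ε, 0 < G y) (henergy : ∀ x ∈ Ioo s b, v' x ^ 2 ≤ 2 * G (v x)) :
    IntegrableOn (fun y => 1 / √(G y)) (Ioc 0 ε) := by
  set f : ℝ → ℝ := fun y => 1 / √(G y)
  have hf_cont : ContinuousOn f (Ioc 0 ε) :=
    continuousOn_const.div hG_cont.sqrt fun y hy => (Real.sqrt_pos.2 (hG_pos y hy)).ne'
  have hv_cont : ContinuousOn v (Ioo s b) := fun x hx => (hv x hx).continuousAt.continuousWithinAt
  have hslope : ∀ x ∈ Ioo s b, f (v x) * -v' x ≤ √2 := by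
    intro x hx
    have hG := Real.sqrt_pos.2 (hG_pos _ (hv_mem x hx))
    have h : -v' x ≤ √2 * √(G (v x)) := by
      rw [← Real.sqrt_mul zero_le_two]
      exact Real.le_sqrt_of_sq_le (by nlinarith [henergy x hx])
    rw [one_div_mul_eq_div, div_le_iff₀ hG]
    linarith
  obtain ⟨t, ht⟩ := nonempty_Ioo.2 hsb
  have hbound : ∀ τ ∈ Ico t b, ∫ y in v τ..v t, f y ≤ √2 * (b - t) := by
    intro τ hτ
    have hsub : uIcc t τ ⊆ Ioo s b := by rw [uIcc_of_le hτ.1]; exact Icc_subset_Ioo ht.1 hτ.2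
    have hIoo : Ioo (min t τ) (max t τ) ⊆ Ioo s b := Ioo_subset_Icc_self.trans hsub
    have hsubst := intervalIntegral.integral_comp_mul_deriv_of_deriv_nonpos (g := f)
      (hv_cont.mono hsub) (fun x hx => hv x (hIoo hx)) (fun x hx => hv'_nonpos x (hIoo hx))
    have hint : IntervalIntegrable (fun x => f (v x) * -v' x) volume t τ :=
      ((hf_cont.comp (hv_cont.mono hsub) fun x hx => hv_mem x (hsub hx)).mul
        (hv'_cont.mono hsub).neg).intervalIntegrable
    rw [intervalIntegral.integral_symm, ← hsubst, ← intervalIntegral.integral_neg]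
    calc ∫ x in t..τ, -((f ∘ v) x * v' x) = ∫ x in t..τ, f (v x) * -v' x := by
          simp only [Function.comp_apply, mul_neg]
      _ ≤ ∫ _ in t..τ, √2 := intervalIntegral.integral_mono_on hτ.1 hint
          intervalIntegrable_const fun x hx => hslope x (hsub (by rwa [uIcc_of_le hτ.1]))
      _ ≤ √2 * (b - t) := by
          rw [intervalIntegral.integral_const, smul_eq_mul, mul_comm]
          gcongr
          exact hτ.2.le
  have hnear_zero : IntegrableOn f (Ioc 0 (v t)) := by
    refine integrableOn_Ioc_of_forall_integral_le (C := √2 * (b - t)) (hv_mem t ht).1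
      (hf_cont.mono (Ioc_subset_Ioc_right (hv_mem t ht).2)) (fun y _ => by positivity)
      fun y hy => ?_
    obtain ⟨τ', hτ'y, hτ'⟩ :=
      ((hvb.eventually (eventually_lt_nhds hy.1)).and (Ioo_mem_nhdsLT ht.2)).exists
    obtain ⟨τ, hτ, rfl⟩ := intermediate_value_Icc' hτ'.1.le
      (hv_cont.mono (Icc_subset_Ioo ht.1 hτ'.2)) ⟨hτ'y.le, hy.2.le⟩
    exact hbound τ ⟨hτ.1, hτ.2.trans_lt hτ'.2⟩
  have haway : IntegrableOn f (Icc (v t) ε) :=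
    (hf_cont.mono (Icc_subset_Ioc (hv_mem t ht).1 le_rfl)).integrableOn_Icc
  exact (hnear_zero.union haway).mono_set Ioc_subset_Ioc_union_Icc

theorem not_tendsto_deriv_nhdsLT_zero_of_conditionG (hsb : s < b)
    (hv : ∀ x ∈ Ioo s b, HasDerivAt v (v' x) x) (hv'_cont : ContinuousOn v' (Ioo s b))
    (hv'' : ∀ c d, s < c → c ≤ d → d < b →
      IntegrableOn v'' (Icc c d) ∧ ∀ x ∈ Icc c d, v' x = v' c + ∫ r in c..x, v'' r)
    (hv''_mem : ∀ᵐ x, x ∈ Ioo s b → 0 ≤ v'' x ∧ v'' x ≤ G' (v x))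
    (hv_mem : ∀ x ∈ Ioo s b, v x ∈ Ioc 0 ε) (hvb : Tendsto v (𝓝[<] b) (𝓝 0))
    (hG' : IntegrableOn G' (Icc 0 ε)) (hG : ∀ y ∈ Icc 0 ε, G y = G 0 + ∫ r in 0..y, G' r)
    (hG_cond : ConditionG_s2 G ε) : ¬ Tendsto v' (𝓝[<] b) (𝓝 0) := by
  intro hv'b
  obtain ⟨t, ht⟩ := nonempty_Ioo.2 hsb
  have hε : 0 ≤ ε := (hv_mem t ht).1.le.trans (hv_mem t ht).2
  have hG_cont := continuousOn_Icc_of_eq_add_integral hε hG' hG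
  have hv'_mono : MonotoneOn v' (Ioo s b) :=
    monotoneOn_of_eq_add_integral_of_ae_nonneg
      (fun c d hc hcd hd => (hv'' c d hc hcd hd).2 d (right_mem_Icc.2 hcd))
      (by filter_upwards [hv''_mem] with x hx hxI using (hx hxI).1)
  have hv'_nonpos : ∀ x ∈ Ioo s b, v' x ≤ 0 := fun x hx => ge_of_tendsto hv'b <| by
    filter_upwards [Ioo_mem_nhdsLT hx.2] with y hy
    exact hv'_mono hx ⟨hx.1.trans hy.1, hy.2⟩ hy.1.le
  have hG0 : 0 ≤ G 0 := by
    refine ge_of_tendsto ((hG_cont 0 (left_mem_Icc.2 hε)).tendsto.comp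
      (tendsto_nhdsWithin_iff.2 ⟨hvb, eventually_of_mem (Ioo_mem_nhdsLT hsb)
        fun x hx => Ioc_subset_Icc_self (hv_mem x hx)⟩)) ?_
    filter_upwards [Ioo_mem_nhdsLT hsb] with x hx
    exact hG_cond.nonneg _ (hv_mem x hx)
  have henergy : ∀ x ∈ Ioo s b, v' x ^ 2 ≤ 2 * G (v x) := fun x hx => by
    have := sq_deriv_le_two_mul_sub_of_tendsto_nhdsLT hv hv'' hv'_nonpos
      (hv''_mem.mono fun y hy hyI => (hy hyI).2) (fun y hy => Ioc_subset_Icc_self (hv_mem y hy))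
      hG' hG hvb hv'b hx
    linarith
  rcases hG_cond with hG_zero | ⟨hG_pos, hG_nonint⟩
  · have hv'_zero : ∀ x ∈ Ioo s b, v' x = 0 := fun x hx => by
      have := henergy x hx
      rw [hG_zero _ (hv_mem x hx)] at this
      nlinarith
    exact (hv_mem t ht).1.ne' (eq_zero_of_hasDerivAt_zero_of_tendsto_nhdsLT
      (fun x hx => hv'_zero x hx ▸ hv x hx) hvb ht)
  · exact hG_nonint (integrableOn_one_div_sqrt_of_sq_deriv_le hsb hv hv'_cont hv'_nonpos hv_mem
      hvb (hG_cont.mono Ioc_subset_Icc_self) hG_pos henergy)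

end BoundaryLayer

theorem nonpos_of_tendsto_deriv_nhdsLT {v v' : ℝ → ℝ} {a b L : ℝ} (hab : a < b)
    (hv_cont : ContinuousOn v (Icc a b)) (hv : ∀ x ∈ Ioo a b, HasDerivAt v (v' x) x)
    (hv_nonneg : ∀ x ∈ Ioo a b, 0 ≤ v x) (hvb : v b = 0)
    (hL : Tendsto v' (𝓝[<] b) (𝓝 L)) : L ≤ 0 := by
  by_contra! hL_pos
  obtain ⟨c, hc, hv'_pos⟩ :=
    (mem_nhdsLT_iff_exists_mem_Ico_Ioo_subset hab).1 (hL.eventually (lt_mem_nhds hL_pos))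
  obtain ⟨d, hd⟩ := nonempty_Ioo.2 hc.2
  have hsub : Ioo d b ⊆ Ioo c b := Ioo_subset_Ioo_left hd.1.le
  have hmono : StrictMonoOn v (Icc d b) := by
    refine strictMonoOn_of_hasDerivWithinAt_pos (f' := v') (convex_Icc d b)
      (hv_cont.mono (Icc_subset_Icc_left (hc.1.trans hd.1.le))) (fun x hx => ?_) fun x hx => ?_
    · rw [interior_Icc] at hx ⊢
      exact (hv x ⟨hc.1.trans_lt (hsub hx).1, hx.2⟩).hasDerivWithinAt
    · rw [interior_Icc] at hx
      exact hv'_pos (hsub hx)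
  have := hmono (left_mem_Icc.2 hd.2.le) (right_mem_Icc.2 hd.2.le) hd.2
  linarith [hv_nonneg d ⟨hc.1.trans_lt hd.1, hd.2⟩]

theorem tendsto_deriv_nhdsLT_zero_of_eq_zero {v v' : ℝ → ℝ} {a b c L : ℝ} (hab : a < b)
    (hbc : b ≤ c) (hv_cont : ContinuousOn v (Icc a c)) (hv : ∀ x ∈ Ioo a c, HasDerivAt v (v' x) x)
    (hv'_cont : ContinuousOn v' (Ioo a c)) (hv_nonneg : ∀ x ∈ Icc a c, 0 ≤ v x) (hvb : v b = 0)
    (hL : Tendsto v' (𝓝[<] c) (𝓝 L)) (hL_nonneg : 0 ≤ L) : Tendsto v' (𝓝[<] b) (𝓝 0) := by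
  rcases hbc.eq_or_lt with rfl | hbc
  · rwa [← le_antisymm (nonpos_of_tendsto_deriv_nhdsLT hab hv_cont hv
      (fun x hx => hv_nonneg x (Ioo_subset_Icc_self hx)) hvb hL) hL_nonneg]
  · have hb : b ∈ Ioo a c := ⟨hab, hbc⟩
    have hmin : IsLocalMin v b := by
      filter_upwards [Ioo_mem_nhds hab hbc] with x hx
      exact hvb ▸ hv_nonneg x (Ioo_subset_Icc_self hx)
    rw [← hmin.hasDerivAt_eq_zero (hv b hb)]
    exact (hv'_cont.continuousAt (Ioo_mem_nhds hab hbc)).tendsto.mono_left nhdsWithin_le_nhds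

theorem exists_first_zero {v : ℝ → ℝ} {a c : ℝ} (hac : a ≤ c) (hv : ContinuousOn v (Icc a c))
    (hva : v a ≠ 0) (hvc : v c = 0) : ∃ b ∈ Ioc a c, v b = 0 ∧ ∀ x ∈ Ico a b, v x ≠ 0 := by
  have hZ : IsCompact (Icc a c ∩ v ⁻¹' {0}) := isCompact_Icc.of_isClosed_subset
    (hv.preimage_isClosed_of_isClosed isClosed_Icc isClosed_singleton) inter_subset_left
  obtain ⟨b, ⟨hb, hvb⟩, hleast⟩ := hZ.exists_isLeast ⟨c, right_mem_Icc.2 hac, hvc⟩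
  refine ⟨b, ⟨hb.1.lt_of_ne fun h => hva (h ▸ hvb), hb.2⟩, hvb, fun x hx hvx => ?_⟩
  exact (hleast ⟨⟨hx.1, hx.2.le.trans hb.2⟩, hvx⟩).not_gt hx.2

theorem strong_maximum_principle_right_boundary_point_general
    (α ω : ℝ)
    (g : ℝ → ℝ → ℝ → ℝ) (v v' v'' : ℝ → ℝ)
    -- v ∈ W^{1,1}(α,ω): v is absolutely continuous on [α,ω] with derivative v' ∈ L¹(α,ω)
    (hv_cont : ContinuousOn v (Icc α ω))
    -- v ∈ W^{2,1}_loc(α,ω): v is C¹ on (α,ω) and v' is locally absolutely continuous there,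
    -- with almost-everywhere derivative v''
    (hv_deriv : ∀ x ∈ Ioo α ω, HasDerivAt v (v' x) x)
    (hv'_cont : ContinuousOn v' (Ioo α ω))
    (hv'_locAC : ∀ c d : ℝ, α < c → c ≤ d → d < ω →
      IntegrableOn v'' (Icc c d) ∧ ∀ x ∈ Icc c d, v' x = v' c + ∫ t in c..x, v'' t)
    -- v nonnegative and not identically zero
    (hv_nonneg : ∀ t ∈ Icc α ω, 0 ≤ v t)
    (hv_nontriv : ∃ t ∈ Ioo α ω, v t ≠ 0)
    -- the differential equation v'' = g(t, v, v') a.e. in (α,ω)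
    (hode : ∀ᵐ t ∂volume, t ∈ Ioo α ω → v'' t = g t (v t) (v' t))
    -- condition (G): G is absolutely continuous on [0,ε] with a.e. derivative G'
    (hG : ∃ ε > (0:ℝ), ∃ G G' : ℝ → ℝ,
      IntegrableOn G' (Icc 0 ε) ∧
      (∀ s ∈ Icc (0:ℝ) ε, G s = G 0 + ∫ r in (0:ℝ)..s, G' r) ∧
      (∀ᵐ t ∂volume, t ∈ Ioo α ω → 0 < v t → v t ≤ ε → |v' t| ≤ ε →
        0 ≤ g t (v t) (v' t) ∧ g t (v t) (v' t) ≤ G' (v t)) ∧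
      ((∀ s ∈ Ioc (0:ℝ) ε, G s = 0) ∨
        ((∀ s ∈ Ioc (0:ℝ) ε, 0 < G s) ∧
          ¬ IntegrableOn (fun s => 1 / Real.sqrt (G s)) (Ioc 0 ε))))
    -- boundary behavior: v(ω) = 0 and v'(ω⁻) = L exists
    (hvω : v ω = 0)
    (L : ℝ) (hL : Tendsto v' (𝓝[<] ω) (𝓝 L)) :
    L < 0 := by
  obtain ⟨ε, hε, G, G', hG', hG_eq, hg_le, hG_cond⟩ := hG
  obtain ⟨t₀, ht₀, hvt₀⟩ := hv_nontriv
  by_contra! hL_nonneg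
  obtain ⟨b, hb, hvb, hv_ne⟩ :=
    exists_first_zero ht₀.2.le (hv_cont.mono (Icc_subset_Icc_left ht₀.1.le)) hvt₀ hvω
  have hαb : α < b := ht₀.1.trans hb.1
  have hv_lim : Tendsto v (𝓝[<] b) (𝓝 0) := by
    rw [← hvb, ← nhdsWithin_Ioo_eq_nhdsLT hαb]
    exact (hv_cont.continuousWithinAt ⟨hαb.le, hb.2⟩).mono
      (Ioo_subset_Icc_self.trans (Icc_subset_Icc_right hb.2))
  have hv'_lim : Tendsto v' (𝓝[<] b) (𝓝 0) := tendsto_deriv_nhdsLT_zero_of_eq_zero hαb hb.2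
    hv_cont hv_deriv hv'_cont hv_nonneg hvb hL hL_nonneg
  obtain ⟨s, hs, hs_small⟩ := (mem_nhdsLT_iff_exists_mem_Ico_Ioo_subset hb.1).1
    ((hv_lim.eventually (eventually_le_nhds hε)).and
      (hv'_lim.abs.eventually (eventually_le_nhds (by rwa [abs_zero]))))
  have hsub : Ioo s b ⊆ Ioo α ω := Ioo_subset_Ioo (ht₀.1.le.trans hs.1) hb.2
  have hv_mem : ∀ x ∈ Ioo s b, v x ∈ Ioc 0 ε := fun x hx =>
    ⟨(hv_nonneg x (Ioo_subset_Icc_self (hsub hx))).lt_of_ne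
      (hv_ne x ⟨hs.1.trans hx.1.le, hx.2⟩).symm, (hs_small hx).1⟩
  refine not_tendsto_deriv_nhdsLT_zero_of_conditionG hs.2 (fun x hx => hv_deriv x (hsub hx))
    (hv'_cont.mono hsub) (fun c d hc hcd hd => 
      hv'_locAC c d (hsub ⟨hc, hcd.trans_lt hd⟩).1 hcd (hd.trans_le hb.2)) ?_
    hv_mem hv_lim hG' hG_eq hG_cond hv'_lim
  filter_upwards [hode, hg_le] with x hx_ode hx_g hx
  rw [hx_ode (hsub hx)]
  exact hx_g (hsub hx) (hv_mem x hx).1 (hv_mem x hx).2 (hs_small hx).2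

/-- **Strong maximum principle, boundary point lemma at the right endpoint (Theorem 2.1(iii)).**
`v ∈ W^{2,1}_loc(α,ω) ∩ W^{1,1}(α,ω)` is a nontrivial nonnegative solution of
`v'' = g(t, v, v')` a.e. in `(α,ω)`; under condition (G), if `v(ω) = 0` and `v'(ω⁻)` exists, then `v'(ω⁻) < 0`. -/
theorem strong_maximum_principle_right_boundary_point
    (α ω : ℝ) (hαω : α < ω)
    (g : ℝ → ℝ → ℝ → ℝ) (v v' v'' : ℝ → ℝ)
    -- v ∈ W^{1,1}(α,ω): v is absolutely continuous on [α,ω] with derivative v' ∈ L¹(α,ω)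
    (hv_cont : ContinuousOn v (Icc α ω))
    (hv'_int : IntegrableOn v' (Ioo α ω))
    (hv_ftc : ∀ x ∈ Icc α ω, v x = v α + ∫ t in α..x, v' t)
    -- v ∈ W^{2,1}_loc(α,ω): v is C¹ on (α,ω) and v' is locally absolutely continuous there,
    -- with almost-everywhere derivative v''
    (hv_deriv : ∀ x ∈ Ioo α ω, HasDerivAt v (v' x) x)
    (hv'_cont : ContinuousOn v' (Ioo α ω))
    (hv'_locAC : ∀ c d : ℝ, α < c → c ≤ d → d < ω →
      IntegrableOn v'' (Icc c d) ∧ ∀ x ∈ Icc c d, v' x = v' c + ∫ t in c..x, v'' t)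
    -- v nonnegative and not identically zero
    (hv_nonneg : ∀ t ∈ Icc α ω, 0 ≤ v t)
    (hv_nontriv : ∃ t ∈ Ioo α ω, v t ≠ 0)
    -- the differential equation v'' = g(t, v, v') a.e. in (α,ω)
    (hode : ∀ᵐ t ∂volume, t ∈ Ioo α ω → v'' t = g t (v t) (v' t))
    -- condition (G): G is absolutely continuous on [0,ε] with a.e. derivative G'
    (hG : ∃ ε > (0:ℝ), ∃ G G' : ℝ → ℝ,
      IntegrableOn G' (Icc 0 ε) ∧
      (∀ s ∈ Icc (0:ℝ) ε, G s = G 0 + ∫ r in (0:ℝ)..s, G' r) ∧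
      (∀ᵐ t ∂volume, t ∈ Ioo α ω → 0 < v t → v t ≤ ε → |v' t| ≤ ε →
        0 ≤ g t (v t) (v' t) ∧ g t (v t) (v' t) ≤ G' (v t)) ∧
      ((∀ s ∈ Ioc (0:ℝ) ε, G s = 0) ∨
        ((∀ s ∈ Ioc (0:ℝ) ε, 0 < G s) ∧
          ¬ IntegrableOn (fun s => 1 / Real.sqrt (G s)) (Ioc 0 ε))))
    -- boundary behavior: v(ω) = 0 and v'(ω⁻) = L exists
    (hvω : v ω = 0)
    (L : ℝ) (hL : Tendsto v' (𝓝[<] ω) (𝓝 L)) :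
    L < 0 :=
  strong_maximum_principle_right_boundary_point_general α ω g v v' v'' hv_cont hv_deriv hv'_cont
    hv'_locAC hv_nonneg hv_nontriv hode hG hvω L hL
end

section
/- Boundary regularity at the left endpoint under an integral decay condition, strong form of Theorem 3.2(j). Let f : (a,b) × ℝ → ℝ and let u ∈ W^{1,1}(a,b) be continuously differentiable on (a,b) with u' locally absolutely continuous on (a,b), satisfying −(u'(x)/√(1+u'(x)²))' = f(x, u(x)) for almost every x ∈ (a,b), with f(x, u(x)) ≥ 0 for almost every x ∈ (a,b). Assume there exist δ > 0 and μ ∈ L¹(a, a+δ) such that f(x, u(x)) ≤ μ(x) for almost every x ∈ (a, a+δ), M(x) := ∫ₐ^x μ(t) dt > 0 for all x ∈ (a, a+δ], and ∫ₐ^{a+δ} dx/√(M(x)) = +∞. Then the limit u'(a⁺) = lim_{x→a⁺} u'(x) is finite, and consequently u'' is integrable on (a, c) for every c ∈ (a,b). -/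
/-!
Since `f(x, u) ≥ 0`, `u'` is antitone, so `u'(a⁺)` exists in `(-∞, +∞]` and only `+∞` has to be
excluded. Integrating `-(ψ(u'))' = f(x, u) ≤ μ` over `[p, q]` and letting `p → a⁺`, where
`u'(p) → +∞` and `ψ(u'(p)) → 1`, gives `1 - ψ(u'(q)) ≤ M(q)`. Since `1 - ψ(s) ≥ 1/(2(1 + s²))`,
this means `1/√M(q) ≤ √2 (1 + |u'(q)|)`, which is integrable near `a` because `u' ∈ L¹`,
contradicting `∫ dx/√M = ∞`. Once `u'` is bounded above, `∫_x^c |u''| = u'(x) - u'(c)` stays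
bounded as `x → a⁺`, so `u'' ∈ L¹(a, c)`.
-/

open Set Filter MeasureTheory Topology
open scoped NNReal Interval

theorem LipschitzWith.comp_absolutelyContinuousOnInterval {X Y : Type*} [PseudoMetricSpace X]
    [PseudoMetricSpace Y] {g : X → Y} {K : ℝ≥0} (hg : LipschitzWith K g) {f : ℝ → X} {a b : ℝ}
    (hf : AbsolutelyContinuousOnInterval f a b) : AbsolutelyContinuousOnInterval (g ∘ f) a b := by
  unfold AbsolutelyContinuousOnInterval at hf ⊢
  have hK := hf.const_mul (K : ℝ)
  rw [mul_zero] at hK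
  refine squeeze_zero (fun E => Finset.sum_nonneg fun i _ => dist_nonneg) (fun E => ?_) hK
  rw [Finset.mul_sum]
  exact Finset.sum_le_sum fun i _ => hg.dist_le_mul _ _

theorem AbsolutelyContinuousOnInterval.integral_comp_mul_deriv {φ φ' W : ℝ → ℝ} {K : ℝ≥0}
    {a b : ℝ} (hW : AbsolutelyContinuousOnInterval W a b) (hφ : ∀ s, HasDerivAt φ (φ' s) s)
    (hφK : LipschitzWith K φ) :
    ∫ t in a..b, φ' (W t) * deriv W t = φ (W b) - φ (W a) := by
  have hftc := (hφK.comp_absolutelyContinuousOnInterval hW).integral_deriv_eq_sub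
  rw [Function.comp_apply, Function.comp_apply] at hftc
  rw [← hftc]
  refine intervalIntegral.integral_congr_ae ?_
  filter_upwards [hW.ae_differentiableAt] with t ht ht'
  exact (((hφ (W t)).comp t (ht (uIoc_subset_uIcc ht')).hasDerivAt).deriv).symm

theorem intervalIntegral.integral_comp_mul_eq_sub_of_eq_integral {φ φ' w g : ℝ → ℝ} {K : ℝ≥0}
    {a b : ℝ} (hab : a ≤ b) (hg : IntervalIntegrable g volume a b)
    (hw : ∀ t ∈ Icc a b, w t = w a + ∫ s in a..t, g s) (hφ : ∀ s, HasDerivAt φ (φ' s) s)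
    (hφK : LipschitzWith K φ) :
    ∫ t in a..b, φ' (w t) * g t = φ (w b) - φ (w a) := by
  set W : ℝ → ℝ := fun t => w a + ∫ s in a..t, g s
  have hWac : AbsolutelyContinuousOnInterval W a b :=
    (LipschitzWith.const (w a)).lipschitzOnWith.absolutelyContinuousOnInterval.add
      (hg.absolutelyContinuousOnInterval_intervalIntegral left_mem_uIcc)
  have hWb : W b = w b := (hw b (right_mem_Icc.2 hab)).symm
  have hWa : W a = w a := by simp [W]
  rw [← hWb, ← hWa, ← hWac.integral_comp_mul_deriv hφ hφK]
  refine intervalIntegral.integral_congr_ae ?_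
  filter_upwards [hg.ae_hasDerivAt_integral] with t ht ht'
  have ht'' : t ∈ Icc a b := by
    rw [uIoc_of_le hab] at ht'
    exact Ioc_subset_Icc_self ht'
  have hderiv : HasDerivAt W (g t) t :=
    (ht (uIoc_subset_uIcc ht') a left_mem_uIcc).const_add (w a)
  rw [hderiv.deriv, hw t ht'']

theorem AntitoneOn.tendsto_nhdsGT_atTop {α β : Type*} [LinearOrder α] [TopologicalSpace α]
    [OrderTopology α] [LinearOrder β] {f : α → β} {a b : α} (hf : AntitoneOn f (Ioo a b))
    (h : ¬BddAbove (f '' Ioo a b)) : Tendsto f (𝓝[>] a) atTop := by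
  rw [tendsto_atTop]
  intro C
  obtain ⟨_, ⟨x, hx, rfl⟩, hCx⟩ := not_bddAbove_iff.1 h C
  filter_upwards [Ioo_mem_nhdsGT hx.1] with t ht
  exact hCx.le.trans (hf ⟨ht.1, ht.2.trans hx.2⟩ hx ht.2.le)

/-- `w` is locally absolutely continuous on `(a, b)` with a.e. derivative `g`. -/
def IsIndefiniteIntegralOnIoo (w g : ℝ → ℝ) (a b : ℝ) : Prop :=
  ∀ c d : ℝ, a < c → c ≤ d → d < b →
    IntegrableOn g (Icc c d) ∧ ∀ x ∈ Icc c d, w x = w c + ∫ t in c..x, g t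

namespace IsIndefiniteIntegralOnIoo

variable {w g : ℝ → ℝ} {a b : ℝ}

theorem antitoneOn (hw : IsIndefiniteIntegralOnIoo w g a b)
    (hg : ∀ᵐ x, x ∈ Ioo a b → g x ≤ 0) : AntitoneOn w (Ioo a b) := by
  intro p hp q hq hpq
  obtain ⟨-, hrep⟩ := hw p q hp.1 hpq hq.2
  have : ∫ t in p..q, g t ≤ 0 := by
    rw [intervalIntegral.integral_of_le hpq]
    refine setIntegral_nonpos_ae measurableSet_Ioc ?_
    filter_upwards [hg] with t h ht using h ⟨hp.1.trans ht.1, ht.2.trans_lt hq.2⟩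
  linarith [hrep q (right_mem_Icc.2 hpq)]

theorem integrableOn_Ioc (hw : IsIndefiniteIntegralOnIoo w g a b)
    (hg : ∀ᵐ x, x ∈ Ioo a b → g x ≤ 0) (hbdd : BddAbove (w '' Ioo a b)) {c : ℝ}
    (hc : c ∈ Ioo a b) : IntegrableOn g (Ioc a c) := by
  obtain ⟨C, hC⟩ := hbdd
  obtain ⟨x, -, hx, hx_lim⟩ := exists_seq_strictAnti_tendsto' hc.1
  have hbound : ∀ n, ∫ t in Ioc (x n) c, ‖g t‖ ≤ C - w c := by
    intro n
    obtain ⟨-, hrep⟩ := hw (x n) c (hx n).1 (hx n).2.le hc.2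
    have hnorm : ∫ t in Ioc (x n) c, ‖g t‖ = -∫ t in x n..c, g t := by
      rw [intervalIntegral.integral_of_le (hx n).2.le, ← integral_neg]
      refine setIntegral_congr_ae measurableSet_Ioc ?_
      filter_upwards [hg] with t h ht
      exact Real.norm_of_nonpos (h ⟨(hx n).1.trans ht.1, ht.2.trans_lt hc.2⟩)
    have := hC (mem_image_of_mem w ⟨(hx n).1, (hx n).2.trans hc.2⟩)
    linarith [hrep c (right_mem_Icc.2 (hx n).2.le)]
  exact integrableOn_Ioc_of_intervalIntegral_norm_bounded_left
    (fun n => (hw (x n) c (hx n).1 (hx n).2.le hc.2).1.mono_set Ioc_subset_Icc_self)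
    hx_lim (Eventually.of_forall hbound)

end IsIndefiniteIntegralOnIoo

namespace PrescribedCurvature

noncomputable def psi (s : ℝ) : ℝ := s / √(1 + s ^ 2)

lemma one_add_sq_rpow_three_halves (s : ℝ) :
    (1 + s ^ 2) ^ ((3 : ℝ) / 2) = √(1 + s ^ 2) ^ 3 := by
  rw [Real.sqrt_eq_rpow, ← Real.rpow_natCast ((1 + s ^ 2) ^ ((1 : ℝ) / 2)) 3,
    ← Real.rpow_mul (by positivity)]
  norm_num

lemma hasDerivAt_psi (s : ℝ) : HasDerivAt psi ((1 + s ^ 2) ^ ((3 : ℝ) / 2))⁻¹ s := by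
  have hpos : 0 < 1 + s ^ 2 := by positivity
  have hr : 0 < √(1 + s ^ 2) := Real.sqrt_pos.2 hpos
  have hsq : √(1 + s ^ 2) ^ 2 = 1 + s ^ 2 := Real.sq_sqrt hpos.le
  have hsqrt : HasDerivAt (fun t => √(1 + t ^ 2)) (s / √(1 + s ^ 2)) s := by
    convert ((hasDerivAt_pow 2 s).const_add 1).sqrt hpos.ne' using 1
    field_simp
    ring
  refine ((hasDerivAt_id s).div hsqrt hr.ne').congr_deriv ?_
  rw [one_add_sq_rpow_three_halves, id]
  field_simp
  linear_combination hsq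

lemma lipschitzWith_psi : LipschitzWith 1 psi := by
  refine lipschitzWith_of_nnnorm_deriv_le (fun s => (hasDerivAt_psi s).differentiableAt)
    fun s => ?_
  have h1 : 1 ≤ (1 + s ^ 2) ^ ((3 : ℝ) / 2) :=
    Real.one_le_rpow (le_add_of_nonneg_right (sq_nonneg s)) (by norm_num)
  rw [(hasDerivAt_psi s).deriv, ← NNReal.coe_le_coe, coe_nnnorm,
    Real.norm_of_nonneg (by positivity)]
  exact inv_le_one_of_one_le₀ h1

lemma psi_eq_inv_sqrt {s : ℝ} (hs : 0 < s) : psi s = (√(1 + s⁻¹ ^ 2))⁻¹ := by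
  have h : √(1 + s ^ 2) = √(s ^ 2) * √(1 + s⁻¹ ^ 2) := by
    rw [← Real.sqrt_mul (sq_nonneg s)]
    congr 1
    field_simp
    ring
  rw [psi, h, Real.sqrt_sq hs.le]
  field_simp

lemma tendsto_psi_atTop : Tendsto psi atTop (𝓝 1) := by
  have h : Tendsto (fun s : ℝ => (√(1 + s⁻¹ ^ 2))⁻¹) atTop (𝓝 (√(1 + 0 ^ 2))⁻¹) :=
    ((tendsto_inv_atTop_zero.pow 2).const_add 1).sqrt.inv₀ (by simp)
  simp only [ne_eq, OfNat.ofNat_ne_zero, not_false_eq_true, zero_pow, add_zero, Real.sqrt_one,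
    inv_one] at h
  exact h.congr' ((eventually_gt_atTop 0).mono fun s hs => (psi_eq_inv_sqrt hs).symm)

lemma inv_two_mul_one_add_sq_le_one_sub_psi (s : ℝ) : (2 * (1 + s ^ 2))⁻¹ ≤ 1 - psi s := by
  have hpos : 0 < 1 + s ^ 2 := by positivity
  have hsq : √(1 + s ^ 2) ^ 2 = 1 + s ^ 2 := Real.sq_sqrt hpos.le
  have h : 1 - psi s - (2 * (1 + s ^ 2))⁻¹ = (√(1 + s ^ 2) - s) ^ 2 / (2 * √(1 + s ^ 2) ^ 2) := by
    rw [psi]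
    field_simp
    linear_combination s ^ 2 * hsq
  have : 0 ≤ 1 - psi s - (2 * (1 + s ^ 2))⁻¹ := h ▸ by positivity
  linarith

lemma inv_sqrt_le_of_one_sub_psi_le {s m : ℝ} (h : 1 - psi s ≤ m) :
    (√m)⁻¹ ≤ √2 * (1 + |s|) := by
  have hm : (2 * (1 + s ^ 2))⁻¹ ≤ m := (inv_two_mul_one_add_sq_le_one_sub_psi s).trans h
  calc (√m)⁻¹ = √m⁻¹ := (Real.sqrt_inv m).symm
    _ ≤ √(2 * (1 + s ^ 2)) := by
        refine Real.sqrt_le_sqrt ?_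
        simpa only [inv_inv] using inv_anti₀ (by positivity) hm
    _ = √2 * √(1 + s ^ 2) := Real.sqrt_mul zero_le_two _
    _ ≤ √2 * (1 + |s|) := by
        gcongr
        rw [Real.sqrt_le_iff]
        constructor
        · positivity
        · nlinarith [abs_nonneg s, sq_abs s]

variable {a b : ℝ} {u' u'' F : ℝ → ℝ}

theorem psi_sub_psi_eq_integral (hw : IsIndefiniteIntegralOnIoo u' u'' a b)
    (hcont : ContinuousOn u' (Ioo a b))
    (heq : ∀ᵐ x, x ∈ Ioo a b → -u'' x = F x * (1 + u' x ^ 2) ^ ((3 : ℝ) / 2))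
    {p q : ℝ} (hp : a < p) (hpq : p ≤ q) (hq : q < b) :
    IntervalIntegrable F volume p q ∧ psi (u' p) - psi (u' q) = ∫ t in p..q, F t := by
  obtain ⟨hint, hrep⟩ := hw p q hp hpq hq
  set ψ' : ℝ → ℝ := fun s => ((1 + s ^ 2) ^ ((3 : ℝ) / 2))⁻¹
  have hF : (fun t => -(ψ' (u' t) * u'' t)) =ᵐ[volume.restrict (Ι p q)] F := by
    rw [uIoc_of_le hpq, EventuallyEq, ae_restrict_iff' measurableSet_Ioc]
    filter_upwards [heq] with t h ht
    have hpos : 0 < (1 + u' t ^ 2) ^ ((3 : ℝ) / 2) := by positivity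
    rw [← mul_neg, h ⟨hp.trans ht.1, ht.2.trans_lt hq⟩, mul_comm,
      mul_inv_cancel_right₀ hpos.ne']
  have hψ'u' : ContinuousOn (fun t => ψ' (u' t)) (uIcc p q) := by
    have hψ' : Continuous ψ' :=
      ((Real.continuous_rpow_const (by norm_num)).comp (by fun_prop)).inv₀
        fun s => (by positivity : (0 : ℝ) < (1 + s ^ 2) ^ ((3 : ℝ) / 2)).ne'
    refine hψ'.comp_continuousOn (hcont.mono ?_)
    rw [uIcc_of_le hpq]
    exact Icc_subset_Ioo hp hq
  have hu'' : IntervalIntegrable u'' volume p q :=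
    (intervalIntegrable_iff_integrableOn_Icc_of_le hpq).2 hint
  refine ⟨(hu''.continuousOn_mul hψ'u').neg.congr_ae hF, ?_⟩
  rw [← intervalIntegral.integral_congr_ae_restrict hF, intervalIntegral.integral_neg,
    intervalIntegral.integral_comp_mul_eq_sub_of_eq_integral hpq hu'' hrep hasDerivAt_psi
      lipschitzWith_psi]
  ring

variable {c : ℝ} {μ : ℝ → ℝ}

theorem psi_sub_psi_le_primitive (hw : IsIndefiniteIntegralOnIoo u' u'' a b)
    (hcont : ContinuousOn u' (Ioo a b))
    (heq : ∀ᵐ x, x ∈ Ioo a b → -u'' x = F x * (1 + u' x ^ 2) ^ ((3 : ℝ) / 2))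
    (hcb : c ≤ b) (hμ : IntegrableOn μ (Ioo a c)) (hFμ : ∀ᵐ x, x ∈ Ioo a c → F x ≤ μ x)
    (hM : ∀ x ∈ Ioc a c, 0 < ∫ t in a..x, μ t) {p q : ℝ} (hp : a < p) (hpq : p ≤ q)
    (hq : q < c) :
    psi (u' p) - psi (u' q) ≤ ∫ t in a..q, μ t := by
  obtain ⟨hF, hflux⟩ := psi_sub_psi_eq_integral hw hcont heq hp hpq (hq.trans_le hcb)
  have hμ_int : ∀ x y, a ≤ x → x ≤ y → y < c → IntervalIntegrable μ volume x y :=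
    fun x y hx hxy hy => (intervalIntegrable_iff_integrableOn_Ioc_of_le hxy).2
      (hμ.mono_set ((Ioc_subset_Ioc_left hx).trans (Ioc_subset_Ioo_right hy)))
  have hFμ' : F ≤ᵐ[volume.restrict (Icc p q)] μ := by
    rw [EventuallyLE, ae_restrict_iff' measurableSet_Icc]
    filter_upwards [hFμ] with t h ht using h ⟨hp.trans_le ht.1, ht.2.trans_lt hq⟩
  calc psi (u' p) - psi (u' q) = ∫ t in p..q, F t := hflux
    _ ≤ ∫ t in p..q, μ t :=
      intervalIntegral.integral_mono_ae_restrict hpq hF (hμ_int p q hp.le hpq hq) hFμ'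
    _ = (∫ t in a..q, μ t) - ∫ t in a..p, μ t :=
      (intervalIntegral.integral_interval_sub_left (hμ_int a q le_rfl (hp.le.trans hpq) hq)
        (hμ_int a p le_rfl hp.le (hpq.trans_lt hq))).symm
    _ ≤ ∫ t in a..q, μ t := sub_le_self _ (hM p ⟨hp, (hpq.trans hq.le)⟩).le

theorem one_sub_psi_le_primitive (hw : IsIndefiniteIntegralOnIoo u' u'' a b)
    (hcont : ContinuousOn u' (Ioo a b))
    (heq : ∀ᵐ x, x ∈ Ioo a b → -u'' x = F x * (1 + u' x ^ 2) ^ ((3 : ℝ) / 2))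
    (hcb : c ≤ b) (hμ : IntegrableOn μ (Ioo a c)) (hFμ : ∀ᵐ x, x ∈ Ioo a c → F x ≤ μ x)
    (hM : ∀ x ∈ Ioc a c, 0 < ∫ t in a..x, μ t) (htop : Tendsto u' (𝓝[>] a) atTop)
    {q : ℝ} (hq : q ∈ Ioo a c) :
    1 - psi (u' q) ≤ ∫ t in a..q, μ t := by
  refine le_of_tendsto ((tendsto_psi_atTop.comp htop).sub_const (psi (u' q))) ?_
  filter_upwards [Ioc_mem_nhdsGT hq.1] with p hp
  exact psi_sub_psi_le_primitive hw hcont heq hcb hμ hFμ hM hp.1 hp.2 hq.2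

theorem integrableOn_one_div_sqrt_primitive (hw : IsIndefiniteIntegralOnIoo u' u'' a b)
    (hint : IntegrableOn u' (Ioo a b)) (hcont : ContinuousOn u' (Ioo a b))
    (heq : ∀ᵐ x, x ∈ Ioo a b → -u'' x = F x * (1 + u' x ^ 2) ^ ((3 : ℝ) / 2))
    (hcb : c ≤ b) (hμ : IntegrableOn μ (Ioo a c)) (hFμ : ∀ᵐ x, x ∈ Ioo a c → F x ≤ μ x)
    (hM : ∀ x ∈ Ioc a c, 0 < ∫ t in a..x, μ t) (htop : Tendsto u' (𝓝[>] a) atTop) :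
    IntegrableOn (fun x => 1 / √(∫ t in a..x, μ t)) (Ioo a c) := by
  have hac : Ioo a c ⊆ Ioo a b := Ioo_subset_Ioo_right hcb
  have hMcont : ContinuousOn (fun x => ∫ t in a..x, μ t) (Ioo a c) := by
    rcases le_or_gt c a with hca | hac'
    · simp [Ioo_eq_empty_of_le hca]
    refine (intervalIntegral.continuousOn_primitive_interval (b := c) ?_).mono ?_
    · rwa [uIcc_of_le hac'.le, integrableOn_Icc_iff_integrableOn_Ioo]
    · exact uIcc_of_le hac'.le ▸ Ioo_subset_Icc_self
  refine Integrable.mono' (g := fun x => √2 * (1 + |u' x|)) ?_ ?_ ?_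
  · exact ((integrableOn_const measure_Ioo_lt_top.ne).add (hint.mono_set hac).abs).const_mul _
  · refine (ContinuousOn.div continuousOn_const hMcont.sqrt fun x hx => ?_).aestronglyMeasurable
      measurableSet_Ioo
    exact (Real.sqrt_pos.2 (hM x ⟨hx.1, hx.2.le⟩)).ne'
  · rw [ae_restrict_iff' measurableSet_Ioo]
    refine Eventually.of_forall fun x hx => ?_
    rw [Real.norm_of_nonneg (by positivity), one_div]
    exact inv_sqrt_le_of_one_sub_psi_le
      (one_sub_psi_le_primitive hw hcont heq hcb hμ hFμ hM htop hx)

end PrescribedCurvature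

theorem boundary_regularity_left_nonneg_curvature_general
    (a b : ℝ) (hab : a < b) (f : ℝ → ℝ → ℝ) (u u' u'' : ℝ → ℝ)
    -- u ∈ W^{1,1}(a,b)
    (hu'_int : IntegrableOn u' (Ioo a b))
    -- u is C¹ on (a,b) with u' locally absolutely continuous, a.e. derivative u''
    (hu'_cont : ContinuousOn u' (Ioo a b))
    (hu'_locAC : ∀ c d : ℝ, a < c → c ≤ d → d < b →
      IntegrableOn u'' (Icc c d) ∧ ∀ x ∈ Icc c d, u' x = u' c + ∫ t in c..x, u'' t)
    -- the prescribed curvature equation a.e. in (a,b)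
    (heq : ∀ᵐ x ∂volume, x ∈ Ioo a b →
      -u'' x = f x (u x) * (1 + u' x ^ 2) ^ ((3:ℝ)/2))
    -- nonnegative curvature
    (hsign : ∀ᵐ x ∂volume, x ∈ Ioo a b → 0 ≤ f x (u x))
    -- integral decay condition at the left endpoint
    (hdecay : ∃ δ > (0:ℝ), a + δ ≤ b ∧ ∃ μ : ℝ → ℝ,
      IntegrableOn μ (Ioo a (a + δ)) ∧
      (∀ᵐ x ∂volume, x ∈ Ioo a (a + δ) → f x (u x) ≤ μ x) ∧
      (∀ x ∈ Ioc a (a + δ), 0 < ∫ t in a..x, μ t) ∧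
      ¬ IntegrableOn (fun x => 1 / Real.sqrt (∫ t in a..x, μ t)) (Ioo a (a + δ))) :
    (∃ L : ℝ, Tendsto u' (𝓝[>] a) (𝓝 L)) ∧
    ∀ c ∈ Ioo a b, IntegrableOn u'' (Ioo a c) := by
  obtain ⟨δ, -, hδb, μ, hμ, hFμ, hM, hM_nonint⟩ := hdecay
  have hw : IsIndefiniteIntegralOnIoo u' u'' a b := hu'_locAC
  have hu''_nonpos : ∀ᵐ x, x ∈ Ioo a b → u'' x ≤ 0 := by
    filter_upwards [heq, hsign] with x h hf hx
    have : 0 ≤ f x (u x) * (1 + u' x ^ 2) ^ ((3 : ℝ) / 2) := mul_nonneg (hf hx) (by positivity)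
    linarith [h hx]
  have hanti : AntitoneOn u' (Ioo a b) := hw.antitoneOn hu''_nonpos
  have hbdd : BddAbove (u' '' Ioo a b) := by
    by_contra hunbdd
    exact hM_nonint (PrescribedCurvature.integrableOn_one_div_sqrt_primitive hw hu'_int hu'_cont
      heq hδb hμ hFμ hM (hanti.tendsto_nhdsGT_atTop hunbdd))
  exact ⟨⟨_, hanti.tendsto_nhdsWithin_Ioo_right (nonempty_Ioo.2 hab) hbdd⟩,
    fun c hc => (hw.integrableOn_Ioc hu''_nonpos hbdd hc).mono_set Ioo_subset_Ioc_self⟩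

/-- **Boundary regularity at the left endpoint under an integral decay condition
(Theorem 3.2(j), strong form).** If `u ∈ W^{1,1}(a,b)` is C¹ on `(a,b)` with `u'` locally
absolutely continuous, solves `-(u'/√(1+u'²))' = f(x,u) ≥ 0` a.e. (equivalently
`-u'' = f(x,u)(1+u'²)^{3/2}` a.e.), and there are `δ > 0` and `μ ∈ L¹(a,a+δ)` with
`f(x,u(x)) ≤ μ(x)` a.e. on `(a,a+δ)`, `M(x) = ∫_a^x μ > 0` on `(a,a+δ]`, and
`∫_a^{a+δ} dx/√(M(x)) = +∞`, then `u'(a⁺)` is finite and `u''` is integrable on `(a,c)`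
for every `c ∈ (a,b)`. -/
theorem boundary_regularity_left_nonneg_curvature
    (a b : ℝ) (hab : a < b) (f : ℝ → ℝ → ℝ) (u u' u'' : ℝ → ℝ)
    -- u ∈ W^{1,1}(a,b)
    (hu_cont : ContinuousOn u (Icc a b))
    (hu'_int : IntegrableOn u' (Ioo a b))
    (hu_ftc : ∀ x ∈ Icc a b, u x = u a + ∫ t in a..x, u' t)
    -- u is C¹ on (a,b) with u' locally absolutely continuous, a.e. derivative u''
    (hu_deriv : ∀ x ∈ Ioo a b, HasDerivAt u (u' x) x)
    (hu'_cont : ContinuousOn u' (Ioo a b))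
    (hu'_locAC : ∀ c d : ℝ, a < c → c ≤ d → d < b →
      IntegrableOn u'' (Icc c d) ∧ ∀ x ∈ Icc c d, u' x = u' c + ∫ t in c..x, u'' t)
    -- the prescribed curvature equation a.e. in (a,b)
    (heq : ∀ᵐ x ∂volume, x ∈ Ioo a b →
      -u'' x = f x (u x) * (1 + u' x ^ 2) ^ ((3:ℝ)/2))
    -- nonnegative curvature
    (hsign : ∀ᵐ x ∂volume, x ∈ Ioo a b → 0 ≤ f x (u x))
    -- integral decay condition at the left endpoint
    (hdecay : ∃ δ > (0:ℝ), a + δ ≤ b ∧ ∃ μ : ℝ → ℝ,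
      IntegrableOn μ (Ioo a (a + δ)) ∧
      (∀ᵐ x ∂volume, x ∈ Ioo a (a + δ) → f x (u x) ≤ μ x) ∧
      (∀ x ∈ Ioc a (a + δ), 0 < ∫ t in a..x, μ t) ∧
      ¬ IntegrableOn (fun x => 1 / Real.sqrt (∫ t in a..x, μ t)) (Ioo a (a + δ))) :
    (∃ L : ℝ, Tendsto u' (𝓝[>] a) (𝓝 L)) ∧
    ∀ c ∈ Ioo a b, IntegrableOn u'' (Ioo a c) :=
  boundary_regularity_left_nonneg_curvature_general a b hab f u u' u'' hu'_int hu'_cont hu'_locAC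
    heq hsign hdecay
end

section
/- Boundary regularity at the left endpoint in the nonpositive-curvature case, strong form of Theorem 3.2(jjj). Let f : (a,b) × ℝ → ℝ and let u ∈ W^{1,1}(a,b) be continuously differentiable on (a,b) with u' locally absolutely continuous on (a,b), satisfying −(u'(x)/√(1+u'(x)²))' = f(x, u(x)) for almost every x ∈ (a,b), with f(x, u(x)) ≤ 0 for almost every x ∈ (a,b). Assume there exist δ > 0 and ν ∈ L¹(a, a+δ) such that f(x, u(x)) ≥ ν(x) for almost every x ∈ (a, a+δ), N(x) := ∫ₐ^x ν(t) dt < 0 for all x ∈ (a, a+δ], and ∫ₐ^{a+δ} dx/√(−N(x)) = +∞. Then the limit u'(a⁺) = lim_{x→a⁺} u'(x) is finite, and consequently u'' is integrable on (a, c) for every c ∈ (a,b). -/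
open Set Filter MeasureTheory Topology

/-!
Since `f ≤ 0`, `u'` is nondecreasing, so `u'(a⁺)` exists in `[-∞, ∞)`. If it were `-∞`, then
for `a < y < x` close to `a`, where `u' < 0` and `|u'|` decreases, the equation and `f ≥ ν` give
`u'(x) ≤ u'(y) + (1 + u'(y)²)^{3/2} · (-N(x))`. Choosing `y` with `u'(y) = -1/(3√(-N(x)))` yields
`u'(x) ≤ -(2/9)/√(-N(x))`, so `1/√(-N)` would be integrable near `a` along with `u'`. Once `u'`
is bounded below, `u'' ≥ 0` has integral at most `u'(c) - u'(a⁺)` over `(a, c)`.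
-/

/-- `φ` is locally absolutely continuous on `(a, b)` with a.e. derivative `φ'`. -/
def IsIndefiniteIntegralOn (φ φ' : ℝ → ℝ) (a b : ℝ) : Prop :=
  ∀ ⦃y x : ℝ⦄, a < y → y ≤ x → x < b →
    IntegrableOn φ' (Icc y x) ∧ φ x = φ y + ∫ t in y..x, φ' t

section

variable {φ φ' : ℝ → ℝ} {a b c : ℝ}

theorem IsIndefiniteIntegralOn.mono_right (hφ : IsIndefiniteIntegralOn φ φ' a b) (hcb : c ≤ b) :
    IsIndefiniteIntegralOn φ φ' a c :=
  fun _ _ hy hyx hx => hφ hy hyx (hx.trans_le hcb)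

theorem IsIndefiniteIntegralOn.monotoneOn (hφ : IsIndefiniteIntegralOn φ φ' a b)
    (hφ' : ∀ᵐ t, t ∈ Ioo a b → 0 ≤ φ' t) : MonotoneOn φ (Ioo a b) := by
  intro y hy x hx hyx
  rw [(hφ hy.1 hyx hx.2).2, le_add_iff_nonneg_right]
  refine intervalIntegral.integral_nonneg_of_ae_restrict hyx ?_
  rw [EventuallyLE, ae_restrict_iff' measurableSet_Icc]
  filter_upwards [hφ'] with t ht htyx using ht ⟨hy.1.trans_le htyx.1, htyx.2.trans_lt hx.2⟩

theorem IsIndefiniteIntegralOn.integrableOn_Ioc_of_bddBelow (hφ : IsIndefiniteIntegralOn φ φ' a b)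
    (hφ' : ∀ᵐ t, t ∈ Ioo a b → 0 ≤ φ' t) (hc : c ∈ Ioo a b) (hbdd : BddBelow (φ '' Ioo a c)) :
    IntegrableOn φ' (Ioc a c) := by
  obtain ⟨B, hB⟩ := hbdd
  obtain ⟨q, -, hq_mem, hq_lim⟩ := exists_seq_strictAnti_tendsto' hc.1
  have hq_ftc (n : ℕ) := hφ (hq_mem n).1 (hq_mem n).2.le hc.2
  refine integrableOn_Ioc_of_intervalIntegral_norm_bounded_left (I := φ c - B)
    (fun n => (hq_ftc n).1.mono_set Ioc_subset_Icc_self) hq_lim (Eventually.of_forall fun n => ?_)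
  have h_norm : ∫ t in Ioc (q n) c, ‖φ' t‖ = ∫ t in Ioc (q n) c, φ' t := by
    refine setIntegral_congr_ae measurableSet_Ioc ?_
    filter_upwards [hφ'] with t ht htq
    exact Real.norm_of_nonneg (ht ⟨(hq_mem n).1.trans htq.1, htq.2.trans_lt hc.2⟩)
  rw [h_norm, ← intervalIntegral.integral_of_le (hq_mem n).2.le]
  linarith [(hq_ftc n).2, hB ⟨q n, hq_mem n, rfl⟩]

end

theorem MonotoneOn.bddBelow_image_Ioo {φ : ℝ → ℝ} {a b x : ℝ} (hφ : MonotoneOn φ (Ioo a b))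
    (hx : a < x) (hbdd : BddBelow (φ '' Ioo a x)) : BddBelow (φ '' Ioo a b) := by
  obtain ⟨B, hB⟩ := hbdd
  refine ⟨B, ?_⟩
  rintro _ ⟨t, ht, rfl⟩
  obtain ⟨s, has, hs⟩ := exists_between (lt_min hx ht.1)
  calc B ≤ φ s := hB ⟨s, ⟨has, hs.trans_le (min_le_left _ _)⟩, rfl⟩
    _ ≤ φ t := hφ ⟨has, (hs.trans_le (min_le_right _ _)).trans ht.2⟩ ht
        (hs.trans_le (min_le_right _ _)).le

theorem integrableOn_Ioo_of_eventually_norm_le {E F : Type*} [NormedAddCommGroup E]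
    [NormedAddCommGroup F] {g : ℝ → E} {φ : ℝ → F} {a b : ℝ} (hg : ContinuousOn g (Ioc a b))
    (hφ : IntegrableOn φ (Ioo a b)) (hle : ∀ᶠ x in 𝓝[>] a, ‖g x‖ ≤ ‖φ x‖) :
    IntegrableOn g (Ioo a b) := by
  obtain ⟨c, hac, hc⟩ := mem_nhdsGT_iff_exists_Ioo_subset.1 hle
  rcases le_or_gt b c with hbc | hcb
  · exact hφ.norm.mono' ((hg.mono Ioo_subset_Ioc_self).aestronglyMeasurable measurableSet_Ioo)
      ((ae_restrict_iff' measurableSet_Ioo).2 (ae_of_all _ fun x hx =>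
        hc ⟨hx.1, hx.2.trans_le hbc⟩))
  have h_left : IntegrableOn g (Ioo a c) :=
    (hφ.mono_set (Ioo_subset_Ioo_right hcb.le)).norm.mono'
      ((hg.mono fun x hx => ⟨hx.1, (hx.2.trans hcb).le⟩).aestronglyMeasurable measurableSet_Ioo)
      ((ae_restrict_iff' measurableSet_Ioo).2 (ae_of_all _ fun x hx => hc hx))
  have h_right : IntegrableOn g (Ico c b) :=
    ((hg.mono (Icc_subset_Ioc_iff hcb.le |>.2 ⟨hac, le_rfl⟩)).integrableOn_Icc).mono_set
      Ico_subset_Icc_self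
  rw [← Ioo_union_Ico_eq_Ioo hac hcb.le]
  exact h_left.union h_right

theorem one_add_sq_rpow_three_halves_le {M : ℝ} (hM : 1 ≤ M) :
    (1 + M ^ 2) ^ ((3 : ℝ) / 2) ≤ 3 * M ^ 3 := by
  have h_nonneg : 0 ≤ (1 + M ^ 2) ^ ((3 : ℝ) / 2) := by positivity
  have h_sq : ((1 + M ^ 2) ^ ((3 : ℝ) / 2)) ^ 2 = (1 + M ^ 2) ^ 3 := by
    rw [← Real.rpow_natCast, ← Real.rpow_mul (by positivity)]
    norm_num
  refine (pow_le_pow_iff_left₀ h_nonneg (by positivity) two_ne_zero).1 ?_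
  rw [h_sq]
  nlinarith [pow_le_pow_left₀ (by positivity) (show 1 + M ^ 2 ≤ 2 * M ^ 2 by nlinarith) 3]

/-- The weight `(1 + φ²)^{3/2}` is frozen at the left endpoint, where `|φ|` is largest. -/
theorem le_add_one_add_sq_rpow_mul_integral {φ φ' ν : ℝ → ℝ} {y x : ℝ} (hyx : y ≤ x)
    (hφ' : IntegrableOn φ' (Icc y x)) (hφ : φ x = φ y + ∫ t in y..x, φ' t)
    (hφ_mono : MonotoneOn φ (Icc y x)) (hφx : φ x ≤ 0)
    (hφ'_le : ∀ᵐ t, t ∈ Icc y x → φ' t ≤ -ν t * (1 + φ t ^ 2) ^ ((3 : ℝ) / 2))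
    (hν : ∀ᵐ t, t ∈ Icc y x → ν t ≤ 0) (hν_int : IntegrableOn ν (Icc y x)) :
    φ x ≤ φ y + (1 + φ y ^ 2) ^ ((3 : ℝ) / 2) * ∫ t in y..x, -ν t := by
  have h_int (g : ℝ → ℝ) (hg : IntegrableOn g (Icc y x)) : IntervalIntegrable g volume y x :=
    (intervalIntegrable_iff_integrableOn_Icc_of_le hyx).2 hg
  have h_mono : ∫ t in y..x, φ' t ≤ ∫ t in y..x, -ν t * (1 + φ y ^ 2) ^ ((3 : ℝ) / 2) := by
    refine intervalIntegral.integral_mono_ae_restrict hyx (h_int _ hφ')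
      (h_int _ (hν_int.neg.mul_const _)) ?_
    rw [EventuallyLE, ae_restrict_iff' measurableSet_Icc]
    filter_upwards [hφ'_le, hν] with t hφ't hνt ht
    have h_sq : φ t ^ 2 ≤ φ y ^ 2 := by
      nlinarith [hφ_mono ⟨le_rfl, hyx⟩ ht ht.1, hφ_mono ht ⟨hyx, le_rfl⟩ ht.2]
    calc φ' t ≤ -ν t * (1 + φ t ^ 2) ^ ((3 : ℝ) / 2) := hφ't ht
      _ ≤ -ν t * (1 + φ y ^ 2) ^ ((3 : ℝ) / 2) := by
        gcongr
        linarith [hνt ht]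
  rw [intervalIntegral.integral_mul_const] at h_mono
  linarith

/-- `y` is chosen with `φ y = -1 / (3 √s)`, which minimises `φ y + (1 + φ y ^ 2) ^ (3/2) * s` up to
constants. -/
theorem le_neg_div_sqrt_of_le_add_rpow {φ : ℝ → ℝ} {a x s : ℝ} (hs : 0 < s) (hs_le : s ≤ 1 / 9)
    (hφ : ContinuousOn φ (Ioc a x)) (hunbdd : ¬BddBelow (φ '' Ioo a x))
    (hcomp : ∀ y ∈ Ioo a x, φ x ≤ φ y + (1 + φ y ^ 2) ^ ((3 : ℝ) / 2) * s) :
    φ x ≤ -(2 / 9) / √s := by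
  have hr : 0 < √s := Real.sqrt_pos.2 hs
  have hr_le : √s ≤ 1 / 3 := Real.sqrt_le_iff.2 ⟨by norm_num, by linarith⟩
  set M := 1 / (3 * √s) with hM
  have hM_one : 1 ≤ M := by rw [hM, le_div_iff₀ (by positivity)]; linarith
  have hM_bound : -M + 3 * M ^ 3 * s = -(2 / 9) / √s := by
    rw [hM]
    field_simp
    linear_combination -9 * Real.sq_sqrt hs.le
  by_cases hφx : φ x ≤ -M
  · refine hφx.trans ?_
    rw [hM, neg_div, neg_le_neg_iff, div_le_div_iff₀ hr (by positivity)]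
    linarith
  obtain ⟨_, ⟨t, ht, rfl⟩, hφt⟩ := not_bddBelow_iff.1 hunbdd (-M)
  obtain ⟨y, hy, hφy⟩ := intermediate_value_Icc ht.2.le
    (hφ.mono fun z hz => ⟨ht.1.trans_le hz.1, hz.2⟩) ⟨hφt.le, (not_le.1 hφx).le⟩
  have hyx : y < x := hy.2.lt_of_ne (by rintro rfl; exact hφx hφy.le)
  calc φ x ≤ -M + (1 + M ^ 2) ^ ((3 : ℝ) / 2) * s := by
        simpa [hφy] using hcomp y ⟨ht.1.trans_le hy.1, hyx⟩
    _ ≤ -M + 3 * M ^ 3 * s := by gcongr; exact one_add_sq_rpow_three_halves_le hM_one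
    _ = -(2 / 9) / √s := hM_bound

section

variable {φ φ' ν : ℝ → ℝ} {a d : ℝ}

theorem le_neg_div_sqrt_neg_primitive_of_not_bddBelow (hφ_cont : ContinuousOn φ (Ioo a d))
    (hφ_mono : MonotoneOn φ (Ioo a d)) (hφ : IsIndefiniteIntegralOn φ φ' a d)
    (hφ' : ∀ᵐ t, t ∈ Ioo a d → φ' t ≤ -ν t * (1 + φ t ^ 2) ^ ((3 : ℝ) / 2))
    (hν : ∀ᵐ t, t ∈ Ioo a d → ν t ≤ 0) (hν_int : IntegrableOn ν (Icc a d))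
    (hN_neg : ∀ x ∈ Ioc a d, ∫ t in a..x, ν t < 0) (hunbdd : ¬BddBelow (φ '' Ioo a d))
    {x : ℝ} (hx : x ∈ Ioo a d) (hφx : φ x ≤ 0) (hN_small : -∫ t in a..x, ν t ≤ 1 / 9) :
    φ x ≤ -(2 / 9) / √(-∫ t in a..x, ν t) := by
  have hsub {y : ℝ} (hy : a < y) : Icc y x ⊆ Ioo a d :=
    fun t ht => ⟨hy.trans_le ht.1, ht.2.trans_lt hx.2⟩
  have hν_int' {y : ℝ} (hy : y ∈ Ioc a d) : IntervalIntegrable ν volume a y :=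
    (intervalIntegrable_iff_integrableOn_Icc_of_le hy.1.le).2
      (hν_int.mono_set (Icc_subset_Icc_right hy.2))
  have hN_x := hN_neg x (Ioo_subset_Ioc_self hx)
  refine le_neg_div_sqrt_of_le_add_rpow (s := -∫ t in a..x, ν t) (by linarith) hN_small
    (hφ_cont.mono fun t ht => ⟨ht.1, ht.2.trans_lt hx.2⟩)
    (fun h => hunbdd (hφ_mono.bddBelow_image_Ioo hx.1 h)) fun y hy => ?_
  have hy_mem : y ∈ Ioc a d := ⟨hy.1, hy.2.le.trans hx.2.le⟩
  obtain ⟨hφ'_int, hφ_ftc⟩ := hφ hy.1 hy.2.le hx.2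
  have h_comp := le_add_one_add_sq_rpow_mul_integral hy.2.le hφ'_int hφ_ftc
    (hφ_mono.mono (hsub hy.1)) hφx
    (by filter_upwards [hφ'] with t ht ht' using ht (hsub hy.1 ht'))
    (by filter_upwards [hν] with t ht ht' using ht (hsub hy.1 ht'))
    (hν_int.mono_set ((hsub hy.1).trans Ioo_subset_Icc_self))
  have h_split : ∫ t in y..x, -ν t = (∫ t in a..y, ν t) - ∫ t in a..x, ν t := by
    rw [intervalIntegral.integral_neg, ← intervalIntegral.integral_interval_sub_left
      (hν_int' (Ioo_subset_Ioc_self hx)) (hν_int' hy_mem)]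
    ring
  have hN_y := hN_neg y hy_mem
  calc φ x ≤ _ := h_comp
    _ ≤ φ y + (1 + φ y ^ 2) ^ ((3 : ℝ) / 2) * -∫ t in a..x, ν t := by gcongr; linarith

theorem bddBelow_of_not_integrableOn_inv_sqrt (had : a < d) (hφ_int : IntegrableOn φ (Ioo a d))
    (hφ_cont : ContinuousOn φ (Ioo a d)) (hφ_mono : MonotoneOn φ (Ioo a d))
    (hφ : IsIndefiniteIntegralOn φ φ' a d)
    (hφ' : ∀ᵐ t, t ∈ Ioo a d → φ' t ≤ -ν t * (1 + φ t ^ 2) ^ ((3 : ℝ) / 2))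
    (hν : ∀ᵐ t, t ∈ Ioo a d → ν t ≤ 0) (hν_int : IntegrableOn ν (Icc a d))
    (hN_neg : ∀ x ∈ Ioc a d, ∫ t in a..x, ν t < 0)
    (hN : ¬IntegrableOn (fun x => 1 / √(-∫ t in a..x, ν t)) (Ioo a d)) :
    BddBelow (φ '' Ioo a d) := by
  by_contra hunbdd
  have hN_cont : ContinuousOn (fun x => ∫ t in a..x, ν t) (Icc a d) := by
    simpa [uIcc_of_le had.le] using
      intervalIntegral.continuousOn_primitive_interval (μ := volume) (a := a) (b := d)
        (by rwa [uIcc_of_le had.le])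
  have hN_lim : Tendsto (fun x => ∫ t in a..x, ν t) (𝓝[>] a) (𝓝 0) := by
    simpa using ((hN_cont a (left_mem_Icc.2 had.le)).mono_of_mem_nhdsWithin
      (Icc_mem_nhdsGT had)).tendsto
  have hN_small : ∀ᶠ x in 𝓝[>] a, -∫ t in a..x, ν t ≤ 1 / 9 := by
    filter_upwards [hN_lim.eventually (Ici_mem_nhds (by norm_num : (-1 / 9 : ℝ) < 0))]
      with x hx
    linarith
  obtain ⟨_, ⟨x₀, hx₀, rfl⟩, hφx₀⟩ := not_bddBelow_iff.1 hunbdd 0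
  have hφ_nonpos : ∀ᶠ x in 𝓝[>] a, φ x ≤ 0 := by
    filter_upwards [Ioo_mem_nhdsGT hx₀.1] with x hx
    exact (hφ_mono ⟨hx.1, hx.2.trans hx₀.2⟩ hx₀ hx.2.le).trans hφx₀.le
  refine hN (integrableOn_Ioo_of_eventually_norm_le (φ := fun x => 9 / 2 * φ x) ?_
    (hφ_int.const_mul _) ?_)
  · refine continuousOn_const.div (hN_cont.mono Ioc_subset_Icc_self).neg.sqrt fun x hx => ?_
    exact (Real.sqrt_pos.2 (neg_pos.2 (hN_neg x hx))).ne'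
  filter_upwards [hN_small, hφ_nonpos, Ioo_mem_nhdsGT had] with x hx_small hφx hx
  have h_bound := le_neg_div_sqrt_neg_primitive_of_not_bddBelow hφ_cont hφ_mono hφ hφ' hν hν_int
    hN_neg hunbdd hx hφx hx_small
  have hr : 0 < √(-∫ t in a..x, ν t) := Real.sqrt_pos.2 (neg_pos.2 (hN_neg x ⟨hx.1, hx.2.le⟩))
  rw [Real.norm_of_nonneg (by positivity), norm_mul, Real.norm_of_nonneg (by norm_num),
    Real.norm_of_nonpos hφx]
  rw [neg_div, le_neg, div_le_iff₀ hr] at h_bound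
  rw [div_le_iff₀ hr]
  nlinarith

end

theorem boundary_regularity_left_nonpos_curvature_general
    (a b : ℝ) (f : ℝ → ℝ → ℝ) (u u' u'' : ℝ → ℝ)
    -- u ∈ W^{1,1}(a,b)
    (hu'_int : IntegrableOn u' (Ioo a b))
    -- u is C¹ on (a,b) with u' locally absolutely continuous, a.e. derivative u''
    (hu'_cont : ContinuousOn u' (Ioo a b))
    (hu'_locAC : ∀ c d : ℝ, a < c → c ≤ d → d < b →
      IntegrableOn u'' (Icc c d) ∧ ∀ x ∈ Icc c d, u' x = u' c + ∫ t in c..x, u'' t)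
    -- the prescribed curvature equation a.e. in (a,b)
    (heq : ∀ᵐ x ∂volume, x ∈ Ioo a b →
      -u'' x = f x (u x) * (1 + u' x ^ 2) ^ ((3:ℝ)/2))
    -- nonpositive curvature
    (hsign : ∀ᵐ x ∂volume, x ∈ Ioo a b → f x (u x) ≤ 0)
    -- integral decay condition at the left endpoint
    (hdecay : ∃ δ > (0:ℝ), a + δ ≤ b ∧ ∃ ν : ℝ → ℝ,
      IntegrableOn ν (Ioo a (a + δ)) ∧
      (∀ᵐ x ∂volume, x ∈ Ioo a (a + δ) → ν x ≤ f x (u x)) ∧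
      (∀ x ∈ Ioc a (a + δ), (∫ t in a..x, ν t) < 0) ∧
      ¬ IntegrableOn (fun x => 1 / Real.sqrt (-(∫ t in a..x, ν t))) (Ioo a (a + δ))) :
    (∃ L : ℝ, Tendsto u' (𝓝[>] a) (𝓝 L)) ∧
    ∀ c ∈ Ioo a b, IntegrableOn u'' (Ioo a c) := by
  obtain ⟨δ, hδ, hδb, ν, hν_int, hν_le, hN_neg, hN⟩ := hdecay
  have had : a < a + δ := lt_add_of_pos_right a hδ
  have hsub : Ioo a (a + δ) ⊆ Ioo a b := Ioo_subset_Ioo_right hδb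
  have hu' : IsIndefiniteIntegralOn u' u'' a b := fun y x hy hyx hx =>
    ⟨(hu'_locAC y x hy hyx hx).1, (hu'_locAC y x hy hyx hx).2 x (right_mem_Icc.2 hyx)⟩
  have hu''_eq : ∀ᵐ x, x ∈ Ioo a b → u'' x = -f x (u x) * (1 + u' x ^ 2) ^ ((3 : ℝ) / 2) := by
    filter_upwards [heq] with x hx hxab
    rw [neg_mul, ← hx hxab, neg_neg]
  have hu''_nonneg : ∀ᵐ x, x ∈ Ioo a b → 0 ≤ u'' x := by
    filter_upwards [hu''_eq, hsign] with x hx hfx hxab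
    rw [hx hxab]
    exact mul_nonneg (neg_nonneg.2 (hfx hxab)) (by positivity)
  have hmono := hu'.monotoneOn hu''_nonneg
  have hbdd : BddBelow (u' '' Ioo a (a + δ)) := by
    refine bddBelow_of_not_integrableOn_inv_sqrt had (hu'_int.mono_set hsub) (hu'_cont.mono hsub)
      (hmono.mono hsub) (hu'.mono_right hδb) ?_ ?_
      (integrableOn_Icc_iff_integrableOn_Ioo (f := ν).2 hν_int) hN_neg hN
    · filter_upwards [hu''_eq, hν_le] with x hx hνx hxd
      rw [hx (hsub hxd)]
      exact mul_le_mul_of_nonneg_right (neg_le_neg (hνx hxd)) (by positivity)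
    · filter_upwards [hν_le, hsign] with x hνx hfx hxd
      exact (hνx hxd).trans (hfx (hsub hxd))
  refine ⟨⟨_, (hmono.mono hsub).tendsto_nhdsWithin_Ioo_right (nonempty_Ioo.2 had) hbdd⟩,
    fun c hc => ?_⟩
  have hbdd_c := (hmono.mono (Ioo_subset_Ioo_right hc.2.le)).bddBelow_image_Ioo had hbdd
  exact (hu'.integrableOn_Ioc_of_bddBelow hu''_nonneg hc hbdd_c).mono_set Ioo_subset_Ioc_self

/-- **Boundary regularity at the left endpoint under an integral decay condition
(Theorem 3.2(jjj), strong form; nonpositive curvature).** If `u ∈ W^{1,1}(a,b)` is C¹ on `(a,b)` with `u'` locally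
absolutely continuous, solves `-(u'/√(1+u'²))' = f(x,u) ≤ 0` a.e. (equivalently
`-u'' = f(x,u)(1+u'²)^{3/2}` a.e.), and there are `δ > 0` and `ν ∈ L¹(a,a+δ)` with
`f(x,u(x)) ≥ ν(x)` a.e. on `(a,a+δ)`, `N(x) = ∫_a^x ν < 0` on `(a,a+δ]`, and
`∫_a^{a+δ} dx/√(-N(x)) = +∞`, then `u'(a⁺)` is finite and `u''` is integrable on `(a,c)`
for every `c ∈ (a,b)`. -/
theorem boundary_regularity_left_nonpos_curvature
    (a b : ℝ) (hab : a < b) (f : ℝ → ℝ → ℝ) (u u' u'' : ℝ → ℝ)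
    -- u ∈ W^{1,1}(a,b)
    (hu_cont : ContinuousOn u (Icc a b))
    (hu'_int : IntegrableOn u' (Ioo a b))
    (hu_ftc : ∀ x ∈ Icc a b, u x = u a + ∫ t in a..x, u' t)
    -- u is C¹ on (a,b) with u' locally absolutely continuous, a.e. derivative u''
    (hu_deriv : ∀ x ∈ Ioo a b, HasDerivAt u (u' x) x)
    (hu'_cont : ContinuousOn u' (Ioo a b))
    (hu'_locAC : ∀ c d : ℝ, a < c → c ≤ d → d < b →
      IntegrableOn u'' (Icc c d) ∧ ∀ x ∈ Icc c d, u' x = u' c + ∫ t in c..x, u'' t)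
    -- the prescribed curvature equation a.e. in (a,b)
    (heq : ∀ᵐ x ∂volume, x ∈ Ioo a b →
      -u'' x = f x (u x) * (1 + u' x ^ 2) ^ ((3:ℝ)/2))
    -- nonpositive curvature
    (hsign : ∀ᵐ x ∂volume, x ∈ Ioo a b → f x (u x) ≤ 0)
    -- integral decay condition at the left endpoint
    (hdecay : ∃ δ > (0:ℝ), a + δ ≤ b ∧ ∃ ν : ℝ → ℝ,
      IntegrableOn ν (Ioo a (a + δ)) ∧
      (∀ᵐ x ∂volume, x ∈ Ioo a (a + δ) → ν x ≤ f x (u x)) ∧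
      (∀ x ∈ Ioc a (a + δ), (∫ t in a..x, ν t) < 0) ∧
      ¬ IntegrableOn (fun x => 1 / Real.sqrt (-(∫ t in a..x, ν t))) (Ioo a (a + δ))) :
    (∃ L : ℝ, Tendsto u' (𝓝[>] a) (𝓝 L)) ∧
    ∀ c ∈ Ioo a b, IntegrableOn u'' (Ioo a c) :=
  boundary_regularity_left_nonpos_curvature_general a b f u u' u'' hu'_int hu'_cont hu'_locAC heq
    hsign hdecay
end

section
/- Boundary regularity at the right endpoint in the nonpositive-curvature case, strong form of Theorem 3.2(jjjj). Let f : (a,b) × ℝ → ℝ and let u ∈ W^{1,1}(a,b) be continuously differentiable on (a,b) with u' locally absolutely continuous on (a,b), satisfying −(u'(x)/√(1+u'(x)²))' = f(x, u(x)) for almost every x ∈ (a,b), with f(x, u(x)) ≤ 0 for almost every x ∈ (a,b). Assume there exist δ > 0 and ν ∈ L¹(b−δ, b) such that f(x, u(x)) ≥ ν(x) for almost every x ∈ (b−δ, b), N(x) := ∫ₓ^b ν(t) dt < 0 for all x ∈ [b−δ, b), and ∫_{b−δ}^b dx/√(−N(x)) = +∞. Then the limit u'(b⁻) = lim_{x→b⁻}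 u'(x) is finite, and consequently u'' is integrable on (c, b) for every c ∈ (a,b). -/
/-!
Since `f(x, u) ≤ 0`, the equation gives `u'' ≥ 0`, so `u'` is nondecreasing and `u'(b⁻)` exists
in `(-∞, +∞]`; if it is finite, `∫_c^d u'' = u'(d) - u'(c)` stays bounded and `u''` is integrable
near `b`. If `u'` were unbounded, then for `x` near `b` with `s = u'(x) ≥ 1` pick `y ∈ (x, b)` with
`u'(y) = 2s`. On `[x, y]` we have `0 ≤ u' ≤ 2s`, hence `u'' ≤ -ν (1 + 4s²)^{3/2} ≤ -27 s³ ν`, and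
integrating gives `s ≤ 27 s³ (-N(x))`, that is `1/√(-N(x)) ≤ 6 u'(x)`. Since `u' ∈ L¹`, this would
make `1/√(-N)` integrable near `b`, contradicting the decay assumption.
-/

open Set Filter MeasureTheory Topology

theorem monotoneOn_of_ftc_of_ae_nonneg {a b : ℝ} {g g' : ℝ → ℝ}
    (hftc : ∀ x y, a < x → x ≤ y → y < b → g y = g x + ∫ t in x..y, g' t)
    (hg' : ∀ᵐ t, t ∈ Ioo a b → 0 ≤ g' t) : MonotoneOn g (Ioo a b) := by
  intro x hx y hy hxy
  have hint : 0 ≤ ∫ t in x..y, g' t := by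
    refine intervalIntegral.integral_nonneg_of_ae_restrict hxy ?_
    filter_upwards [ae_restrict_of_ae hg', ae_restrict_mem measurableSet_Icc] with t ht htI
    exact ht ⟨hx.1.trans_le htI.1, htI.2.trans_lt hy.2⟩
  linarith [hftc x y hx.1 hxy hy.2]

theorem exists_mem_Ico_eq_of_not_bddAbove {a b x v : ℝ} {g : ℝ → ℝ}
    (hcont : ContinuousOn g (Ioo a b)) (hmono : MonotoneOn g (Ioo a b))
    (hunb : ¬ BddAbove (g '' Ioo a b)) (hx : x ∈ Ioo a b) (hv : g x ≤ v) :
    ∃ y ∈ Ico x b, g y = v := by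
  obtain ⟨_, ⟨z, hz, rfl⟩, hvz⟩ := not_bddAbove_iff.1 hunb v
  have hxz : x ≤ z := (hmono.reflect_lt hx hz (hv.trans_lt hvz)).le
  obtain ⟨y, hy, rfl⟩ :=
    intermediate_value_Icc hxz (hcont.mono (Icc_subset_Ioo hx.1 hz.2)) ⟨hv, hvz.le⟩
  exact ⟨y, ⟨hy.1, hy.2.trans_lt hz.2⟩, rfl⟩

theorem sub_le_rpow_mul_integral_neg {x y : ℝ} {g g' ν : ℝ → ℝ} (hxy : x ≤ y)
    (hftc : g y = g x + ∫ t in x..y, g' t) (hg' : IntervalIntegrable g' volume x y)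
    (hν : IntervalIntegrable ν volume x y) (hgx : 0 ≤ g x) (hmono : MonotoneOn g (Icc x y))
    (hbound : ∀ᵐ t ∂volume.restrict (Icc x y),
      ν t ≤ 0 ∧ g' t ≤ -ν t * (1 + g t ^ 2) ^ (3 / 2 : ℝ)) :
    g y - g x ≤ (1 + g y ^ 2) ^ (3 / 2 : ℝ) * ∫ t in x..y, -ν t := by
  set K := (1 + g y ^ 2) ^ (3 / 2 : ℝ)
  have hle : g' ≤ᵐ[volume.restrict (Icc x y)] fun t => K * -ν t := by
    filter_upwards [hbound, ae_restrict_mem measurableSet_Icc] with t ⟨hνt, hg't⟩ ht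
    have hgt : g t ^ 2 ≤ g y ^ 2 :=
      pow_le_pow_left₀ (hgx.trans (hmono ⟨le_rfl, hxy⟩ ht ht.1))
        (hmono ht ⟨hxy, le_rfl⟩ ht.2) 2
    calc g' t ≤ -ν t * (1 + g t ^ 2) ^ (3 / 2 : ℝ) := hg't
      _ ≤ -ν t * K := mul_le_mul_of_nonneg_left
          (Real.rpow_le_rpow (by positivity) (by linarith) (by norm_num)) (by linarith)
      _ = K * -ν t := mul_comm _ _
  rw [← intervalIntegral.integral_const_mul, hftc, add_sub_cancel_left]
  exact intervalIntegral.integral_mono_ae_restrict hxy hg' (hν.neg.const_mul K) hle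

theorem one_add_two_mul_sq_rpow_le {s : ℝ} (hs : 1 ≤ s) :
    (1 + (2 * s) ^ 2) ^ (3 / 2 : ℝ) ≤ (3 * s) ^ 3 := by
  calc (1 + (2 * s) ^ 2) ^ (3 / 2 : ℝ) ≤ ((3 * s) ^ 2) ^ (3 / 2 : ℝ) :=
        Real.rpow_le_rpow (by positivity) (by nlinarith) (by norm_num)
    _ = (3 * s) ^ 3 := by
        rw [← Real.rpow_natCast, ← Real.rpow_mul (by positivity)]
        norm_num

theorem one_div_sqrt_le_of_le_rpow_mul {s n : ℝ} (hs : 1 ≤ s)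
    (h : s ≤ (1 + (2 * s) ^ 2) ^ (3 / 2 : ℝ) * n) : 1 / √n ≤ 6 * s := by
  have hK := one_add_two_mul_sq_rpow_le hs
  have hn : 0 < n := pos_of_mul_pos_right (lt_of_lt_of_le (by linarith) h) (by positivity)
  have h27 : s ≤ 27 * s ^ 3 * n := by nlinarith
  rw [div_le_iff₀ (Real.sqrt_pos.2 hn), ← Real.sqrt_sq (by positivity : (0:ℝ) ≤ 6 * s),
    ← Real.sqrt_mul (by positivity)]
  exact Real.one_le_sqrt.2 (by nlinarith)

theorem one_div_sqrt_neg_integral_le {a b c x : ℝ} {g g' ν : ℝ → ℝ}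
    (hcont : ContinuousOn g (Ioo a b)) (hmono : MonotoneOn g (Ioo a b))
    (hunb : ¬ BddAbove (g '' Ioo a b))
    (hint : ∀ x y, a < x → x ≤ y → y < b → IntervalIntegrable g' volume x y)
    (hftc : ∀ x y, a < x → x ≤ y → y < b → g y = g x + ∫ t in x..y, g' t)
    (hν : IntegrableOn ν (Ioo c b)) (hνneg : ∀ᵐ t, t ∈ Ioo c b → ν t ≤ 0)
    (hg' : ∀ᵐ t, t ∈ Ioo c b → g' t ≤ -ν t * (1 + g t ^ 2) ^ (3 / 2 : ℝ))
    (hac : a ≤ c) (hx : x ∈ Ioo c b) (hgx : 1 ≤ g x) :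
    1 / √(-∫ t in x..b, ν t) ≤ 6 * g x := by
  have hxab : x ∈ Ioo a b := ⟨hac.trans_lt hx.1, hx.2⟩
  obtain ⟨y, ⟨hxy, hyb⟩, hy⟩ :=
    exists_mem_Ico_eq_of_not_bddAbove hcont hmono hunb hxab (by linarith : g x ≤ 2 * g x)
  have hsub : Icc x y ⊆ Ioo c b := Icc_subset_Ioo hx.1 hyb
  have hνxy : IntervalIntegrable ν volume x y :=
    (hν.mono_set (by rwa [uIcc_of_le hxy])).intervalIntegrable
  have hνyb : IntervalIntegrable ν volume y b :=
    (intervalIntegrable_iff_integrableOn_Ioo_of_le hyb.le).2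
      (hν.mono_set (Ioo_subset_Ioo_left (hx.1.trans_le hxy).le))
  have hincr := sub_le_rpow_mul_integral_neg hxy (hftc x y hxab.1 hxy hyb)
    (hint x y hxab.1 hxy hyb) hνxy (by linarith) (hmono.mono (Icc_subset_Ioo hxab.1 hyb)) (by
      filter_upwards [ae_restrict_of_ae hνneg, ae_restrict_of_ae hg',
        ae_restrict_mem measurableSet_Icc] with t hνt hg't ht
      exact ⟨hνt (hsub ht), hg't (hsub ht)⟩)
  have htail : ∫ t in x..y, -ν t ≤ -∫ t in x..b, ν t := by
    have hyb_nonneg : 0 ≤ ∫ t in y..b, -ν t := by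
      refine intervalIntegral.integral_nonneg_of_ae_restrict hyb.le ?_
      rw [← Measure.restrict_congr_set Ioo_ae_eq_Icc]
      filter_upwards [ae_restrict_of_ae hνneg, ae_restrict_mem measurableSet_Ioo] with t hνt ht
      exact neg_nonneg.2 (hνt ⟨(hx.1.trans_le hxy).trans ht.1, ht.2⟩)
    rw [intervalIntegral.integral_neg] at hyb_nonneg ⊢
    linarith [intervalIntegral.integral_add_adjacent_intervals hνxy hνyb]
  rw [hy] at hincr
  refine one_div_sqrt_le_of_le_rpow_mul hgx ?_
  calc g x = 2 * g x - g x := by ring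
    _ ≤ (1 + (2 * g x) ^ 2) ^ (3 / 2 : ℝ) * ∫ t in x..y, -ν t := hincr
    _ ≤ (1 + (2 * g x) ^ 2) ^ (3 / 2 : ℝ) * -∫ t in x..b, ν t := by gcongr

theorem integrableOn_Ioo_of_continuousOn_Ico_of_norm_le {c x₀ b : ℝ} {h g : ℝ → ℝ}
    (hcont : ContinuousOn h (Ico c b)) (hx₀ : x₀ ∈ Ico c b)
    (hg : IntegrableOn g (Ioo x₀ b)) (hle : ∀ x ∈ Ioo x₀ b, ‖h x‖ ≤ g x) :
    IntegrableOn h (Ioo c b) := by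
  rw [← Ioc_union_Ioo_eq_Ioo hx₀.1 hx₀.2]
  refine IntegrableOn.union ?_ ?_
  · exact ((hcont.mono (Icc_subset_Ico_right hx₀.2)).integrableOn_Icc).mono_set
      Ioc_subset_Icc_self
  · refine Integrable.mono' hg ?_ ((ae_restrict_iff' measurableSet_Ioo).2 (.of_forall hle))
    exact (hcont.mono fun t ht => ⟨hx₀.1.trans ht.1.le, ht.2⟩).aestronglyMeasurable
      measurableSet_Ioo

theorem integrableOn_one_div_sqrt_neg_integral_of_not_bddAbove {a b c : ℝ} {g g' ν : ℝ → ℝ}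
    (hcont : ContinuousOn g (Ioo a b)) (hmono : MonotoneOn g (Ioo a b))
    (hunb : ¬ BddAbove (g '' Ioo a b)) (hg : IntegrableOn g (Ioo a b))
    (hint : ∀ x y, a < x → x ≤ y → y < b → IntervalIntegrable g' volume x y)
    (hftc : ∀ x y, a < x → x ≤ y → y < b → g y = g x + ∫ t in x..y, g' t)
    (hν : IntegrableOn ν (Ioo c b)) (hνneg : ∀ᵐ t, t ∈ Ioo c b → ν t ≤ 0)
    (hg' : ∀ᵐ t, t ∈ Ioo c b → g' t ≤ -ν t * (1 + g t ^ 2) ^ (3 / 2 : ℝ))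
    (hN : ∀ x ∈ Ico c b, ∫ t in x..b, ν t < 0) (hac : a ≤ c) (hcb : c < b) :
    IntegrableOn (fun x => 1 / √(-∫ t in x..b, ν t)) (Ioo c b) := by
  obtain ⟨x₀, ⟨hx₀m, hx₀b⟩, hx₀⟩ := exists_mem_Ico_eq_of_not_bddAbove hcont hmono hunb
    (x := (c + b) / 2) ⟨by linarith, by linarith⟩ (le_max_right 1 _)
  have hcx₀ : c < x₀ := by linarith
  have hN_cont : ContinuousOn (fun x => ∫ t in x..b, ν t) (Icc c b) := by
    have hν' : IntegrableOn ν (uIcc c b) := by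
      rwa [uIcc_of_le hcb.le, integrableOn_Icc_iff_integrableOn_Ioo]
    simpa only [uIcc_of_le hcb.le] using
      intervalIntegral.continuousOn_primitive_interval_left hν'
  have hcont' : ContinuousOn (fun x => 1 / √(-∫ t in x..b, ν t)) (Ico c b) :=
    continuousOn_const.div (hN_cont.mono Ico_subset_Icc_self).neg.sqrt
      fun x hx => (Real.sqrt_pos.2 (neg_pos.2 (hN x hx))).ne'
  refine integrableOn_Ioo_of_continuousOn_Ico_of_norm_le hcont' ⟨hcx₀.le, hx₀b⟩
    ((hg.mono_set (Ioo_subset_Ioo_left (hac.trans hcx₀.le))).const_mul 6) fun x hx => ?_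
  have hx₀x : g x₀ ≤ g x := hmono ⟨hac.trans_lt hcx₀, hx₀b⟩
    ⟨(hac.trans_lt hcx₀).trans hx.1, hx.2⟩ hx.1.le
  rw [Real.norm_of_nonneg (by positivity)]
  exact one_div_sqrt_neg_integral_le hcont hmono hunb hint hftc hν hνneg hg' hac
    ⟨hcx₀.trans hx.1, hx.2⟩ (by linarith [le_max_left 1 (g ((c + b) / 2))])

theorem integrableOn_Ioo_of_ae_nonneg_of_intervalIntegral_le {c b C : ℝ} {g : ℝ → ℝ}
    (hcb : c < b) (hint : ∀ d ∈ Ioo c b, IntervalIntegrable g volume c d)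
    (hnonneg : ∀ᵐ t, t ∈ Ioo c b → 0 ≤ g t)
    (hbound : ∀ d ∈ Ioo c b, ∫ t in c..d, g t ≤ C) : IntegrableOn g (Ioo c b) := by
  obtain ⟨d, -, hd, hlim⟩ := exists_seq_strictMono_tendsto' hcb
  refine (integrableOn_Ioc_of_intervalIntegral_norm_bounded_right (I := C)
    (fun n => (hint _ (hd n)).1) hlim (.of_forall fun n => ?_)).mono_set Ioo_subset_Ioc_self
  calc ∫ t in Ioc c (d n), ‖g t‖ = ∫ t in c..d n, g t := by
        rw [intervalIntegral.integral_of_le (hd n).1.le]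
        refine setIntegral_congr_ae measurableSet_Ioc ?_
        filter_upwards [hnonneg] with t ht htI
        exact Real.norm_of_nonneg (ht ⟨htI.1, htI.2.trans_lt (hd n).2⟩)
    _ ≤ C := hbound _ (hd n)

theorem boundary_regularity_right_nonpos_curvature_general
    (a b : ℝ) (f : ℝ → ℝ → ℝ) (u u' u'' : ℝ → ℝ)
    -- u ∈ W^{1,1}(a,b)
    (hu'_int : IntegrableOn u' (Ioo a b))
    -- u is C¹ on (a,b) with u' locally absolutely continuous, a.e. derivative u''
    (hu'_cont : ContinuousOn u' (Ioo a b))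
    (hu'_locAC : ∀ c d : ℝ, a < c → c ≤ d → d < b →
      IntegrableOn u'' (Icc c d) ∧ ∀ x ∈ Icc c d, u' x = u' c + ∫ t in c..x, u'' t)
    -- the prescribed curvature equation a.e. in (a,b)
    (heq : ∀ᵐ x ∂volume, x ∈ Ioo a b →
      -u'' x = f x (u x) * (1 + u' x ^ 2) ^ ((3:ℝ)/2))
    -- nonpositive curvature
    (hsign : ∀ᵐ x ∂volume, x ∈ Ioo a b → f x (u x) ≤ 0)
    -- integral decay condition at the right endpoint
    (hdecay : ∃ δ > (0:ℝ), a ≤ b - δ ∧ ∃ ν : ℝ → ℝ,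
      IntegrableOn ν (Ioo (b - δ) b) ∧
      (∀ᵐ x ∂volume, x ∈ Ioo (b - δ) b → ν x ≤ f x (u x)) ∧
      (∀ x ∈ Ico (b - δ) b, (∫ t in x..b, ν t) < 0) ∧
      ¬ IntegrableOn (fun x => 1 / Real.sqrt (-(∫ t in x..b, ν t))) (Ioo (b - δ) b)) :
    (∃ L : ℝ, Tendsto u' (𝓝[<] b) (𝓝 L)) ∧
    ∀ c ∈ Ioo a b, IntegrableOn u'' (Ioo c b) := by
  obtain ⟨δ, hδ, haδ, ν, hν, hνf, hN, hN_div⟩ := hdecay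
  have hpow_pos : ∀ t, 0 < (1 + u' t ^ 2) ^ (3 / 2 : ℝ) := fun t => by positivity
  have hu''_nonneg : ∀ᵐ t, t ∈ Ioo a b → 0 ≤ u'' t := by
    filter_upwards [heq, hsign] with t heq_t hsign_t ht
    nlinarith [heq_t ht, hsign_t ht, hpow_pos t]
  have hν_nonpos : ∀ᵐ t, t ∈ Ioo (b - δ) b → ν t ≤ 0 := by
    filter_upwards [hνf, hsign] with t hνf_t hsign_t ht
    exact (hνf_t ht).trans (hsign_t ⟨haδ.trans_lt ht.1, ht.2⟩)
  have hu''_le : ∀ᵐ t, t ∈ Ioo (b - δ) b → u'' t ≤ -ν t * (1 + u' t ^ 2) ^ (3 / 2 : ℝ) := by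
    filter_upwards [heq, hνf] with t heq_t hνf_t ht
    nlinarith [heq_t ⟨haδ.trans_lt ht.1, ht.2⟩, hνf_t ht, hpow_pos t]
  have hint : ∀ x y, a < x → x ≤ y → y < b → IntervalIntegrable u'' volume x y :=
    fun x y hx hxy hy =>
      ((hu'_locAC x y hx hxy hy).1.mono_set (by rw [uIcc_of_le hxy])).intervalIntegrable
  have hftc : ∀ x y, a < x → x ≤ y → y < b → u' y = u' x + ∫ t in x..y, u'' t :=
    fun x y hx hxy hy => (hu'_locAC x y hx hxy hy).2 y ⟨hxy, le_rfl⟩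
  have hmono := monotoneOn_of_ftc_of_ae_nonneg hftc hu''_nonneg
  have hbdd : BddAbove (u' '' Ioo a b) := by
    by_contra hunb
    exact hN_div (integrableOn_one_div_sqrt_neg_integral_of_not_bddAbove hu'_cont hmono hunb
      hu'_int hint hftc hν hν_nonpos hu''_le hN haδ (by linarith))
  refine ⟨⟨_, hmono.tendsto_nhdsWithin_Ioo_left ⟨b - δ / 2, by linarith, by linarith⟩ hbdd⟩,
    fun c hc => ?_⟩
  obtain ⟨M, hM⟩ := hbdd
  refine integrableOn_Ioo_of_ae_nonneg_of_intervalIntegral_le (C := M - u' c) hc.2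
    (fun d hd => hint c d hc.1 hd.1.le hd.2)
    (hu''_nonneg.mono fun t ht ht' => ht ⟨hc.1.trans ht'.1, ht'.2⟩) fun d hd => ?_
  linarith [hftc c d hc.1 hd.1.le hd.2, hM ⟨d, ⟨hc.1.trans hd.1, hd.2⟩, rfl⟩]

/-- **Boundary regularity at the right endpoint under an integral decay condition
(Theorem 3.2(jjjj), strong form; nonpositive curvature).** If `u ∈ W^{1,1}(a,b)` is C¹ on `(a,b)` with `u'` locally
absolutely continuous, solves `-(u'/√(1+u'²))' = f(x,u) ≤ 0` a.e. (equivalently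
`-u'' = f(x,u)(1+u'²)^{3/2}` a.e.), and there are `δ > 0` and `ν ∈ L¹(b-δ,b)` with
`f(x,u(x)) ≥ ν(x)` a.e. on `(b-δ,b)`, `N(x) = ∫_x^b ν < 0` on `[b-δ,b)`, and
`∫_{b-δ}^b dx/√(-N(x)) = +∞`, then `u'(b⁻)` is finite and `u''` is integrable on `(c,b)`
for every `c ∈ (a,b)`. -/
theorem boundary_regularity_right_nonpos_curvature
    (a b : ℝ) (hab : a < b) (f : ℝ → ℝ → ℝ) (u u' u'' : ℝ → ℝ)
    -- u ∈ W^{1,1}(a,b)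
    (hu_cont : ContinuousOn u (Icc a b))
    (hu'_int : IntegrableOn u' (Ioo a b))
    (hu_ftc : ∀ x ∈ Icc a b, u x = u a + ∫ t in a..x, u' t)
    -- u is C¹ on (a,b) with u' locally absolutely continuous, a.e. derivative u''
    (hu_deriv : ∀ x ∈ Ioo a b, HasDerivAt u (u' x) x)
    (hu'_cont : ContinuousOn u' (Ioo a b))
    (hu'_locAC : ∀ c d : ℝ, a < c → c ≤ d → d < b →
      IntegrableOn u'' (Icc c d) ∧ ∀ x ∈ Icc c d, u' x = u' c + ∫ t in c..x, u'' t)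
    -- the prescribed curvature equation a.e. in (a,b)
    (heq : ∀ᵐ x ∂volume, x ∈ Ioo a b →
      -u'' x = f x (u x) * (1 + u' x ^ 2) ^ ((3:ℝ)/2))
    -- nonpositive curvature
    (hsign : ∀ᵐ x ∂volume, x ∈ Ioo a b → f x (u x) ≤ 0)
    -- integral decay condition at the right endpoint
    (hdecay : ∃ δ > (0:ℝ), a ≤ b - δ ∧ ∃ ν : ℝ → ℝ,
      IntegrableOn ν (Ioo (b - δ) b) ∧
      (∀ᵐ x ∂volume, x ∈ Ioo (b - δ) b → ν x ≤ f x (u x)) ∧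
      (∀ x ∈ Ico (b - δ) b, (∫ t in x..b, ν t) < 0) ∧
      ¬ IntegrableOn (fun x => 1 / Real.sqrt (-(∫ t in x..b, ν t))) (Ioo (b - δ) b)) :
    (∃ L : ℝ, Tendsto u' (𝓝[<] b) (𝓝 L)) ∧
    ∀ c ∈ Ioo a b, IntegrableOn u'' (Ioo c b) :=
  boundary_regularity_right_nonpos_curvature_general a b f u u' u'' hu'_int hu'_cont hu'_locAC heq
    hsign hdecay
end
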